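/- arXiv:1309.5469 — 12 statements merged into one kernel-verified Lean document; each statement's English description precedes it below -/
import Mathlib

section
/- (Min-Max-Theorem for k-submodular functions.) Let k ≥ 2 and n ≥ 1, and let f : 𝔗^n → ℝ be k-submodular with f(𝟎) = 0. Then min_{T ∈ 𝔗^n} f(T) = max_{(x,L) ∈ U(f)} −‖x‖; that is, there exists (x,L) ∈ U(f) with min_{T ∈ 𝔗^n} f(T) = −‖x‖, and −‖x'‖ ≤ min_{T ∈ 𝔗^n} f(T) for every (x',L') ∈ U(f). -/
/-- The star tree `𝔗` with `k` leaves: `none` is the root `o`, `some ℓ` the leaves. -/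
abbrev KTree (k : ℕ) := Option (Fin k)

/-- The intersection `⊓` on `𝔗`. -/
def tmeet {k : ℕ} (a b : KTree k) : KTree k := if a = b then a else none

/-- The union `⊔` on `𝔗`. -/
def tjoin {k : ℕ} : KTree k → KTree k → KTree k
  | none, b => b
  | a, none => a
  | some p, some q => if p = q then some p else none

/-- Componentwise intersection on `𝔗^n`. -/
def vmeet {k n : ℕ} (T U : Fin n → KTree k) : Fin n → KTree k := fun i => tmeet (T i) (U i)

/-- Componentwise union on `𝔗^n`. -/
def vjoin {k n : ℕ} (T U : Fin n → KTree k) : Fin n → KTree k := fun i => tjoin (T i) (U i)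

/-- `f : 𝔗^n → ℝ` is `k`-submodular. -/
def KSubmodular {k n : ℕ} (f : (Fin n → KTree k) → ℝ) : Prop :=
  ∀ T U, f (vmeet T U) + f (vjoin T U) ≤ f T + f U

/-- The function `\overline{(x,L)} : 𝔗^n → ℝ`. -/
def obar {k n : ℕ} (x : Fin n → ℝ) (L : Fin n → Fin k) (T : Fin n → KTree k) : ℝ :=
  ∑ i, Option.elim (T i) 0 (fun ℓ => if ℓ = L i then x i else -x i)

/-- Membership `(x,L) ∈ U(f)`. -/
def memU {k n : ℕ} (f : (Fin n → KTree k) → ℝ) (x : Fin n → ℝ) (L : Fin n → Fin k) : Prop :=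
  (∀ i, 0 ≤ x i) ∧ ∀ T, obar x L T ≤ f T

/-- The `L¹`-norm `‖x‖`. -/
def nrm {n : ℕ} (x : Fin n → ℝ) : ℝ := ∑ i, x i

/- ## Auxiliary material -/

/-- One-coordinate version of `obar`. -/
def gfun (k : ℕ) (xn : ℝ) (b : Fin k) : KTree k → ℝ :=
  fun t => Option.elim t 0 (fun ℓ => if ℓ = b then xn else -xn)

@[simp] lemma gfun_none {k : ℕ} (xn : ℝ) (b : Fin k) : gfun k xn b none = 0 := rfl

@[simp] lemma gfun_some {k : ℕ} (xn : ℝ) (b ℓ : Fin k) :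
    gfun k xn b (some ℓ) = if ℓ = b then xn else -xn := rfl

@[simp] lemma tmeet_none_left {k : ℕ} (t : KTree k) : tmeet none t = none := by
  simp [tmeet]

@[simp] lemma tmeet_none_right {k : ℕ} (t : KTree k) : tmeet t none = none := by
  rcases t with _ | p <;> simp [tmeet]

@[simp] lemma tjoin_none_left {k : ℕ} (t : KTree k) : tjoin none t = t := by
  rcases t with _ | p <;> rfl

@[simp] lemma tjoin_none_right {k : ℕ} (t : KTree k) : tjoin t none = t := by
  rcases t with _ | p <;> rfl

lemma tmeet_some_ne {k : ℕ} {p q : Fin k} (h : p ≠ q) :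
    tmeet (some p) (some q) = none := by simp [tmeet, h]

lemma tjoin_some_ne {k : ℕ} {p q : Fin k} (h : p ≠ q) :
    tjoin (some p) (some q) = none := by simp [tjoin, h]

lemma gfun_super {k : ℕ} {xn : ℝ} (hx : 0 ≤ xn) (b : Fin k) (s t : KTree k) :
    gfun k xn b s + gfun k xn b t ≤ gfun k xn b (tmeet s t) + gfun k xn b (tjoin s t) := by
  rcases s with _ | p <;> rcases t with _ | q
  · simp
  · simp
  · simp
  · by_cases h : p = q
    · subst h
      have h1 : tmeet (some p) (some p) = some p := by simp [tmeet]
      have h2 : tjoin (some p) (some p) = some p := by simp [tjoin]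
      rw [h1, h2]
    · rw [tmeet_some_ne h, tjoin_some_ne h]
      simp only [gfun_some, gfun_none]
      by_cases hp : p = b <;> by_cases hq : q = b
      · exact absurd (hp.trans hq.symm) h
      · simp [hp, hq]
      · simp [hp, hq]
      · simp [hp, hq]; linarith

lemma vmeet_snoc {k n : ℕ} (T U : Fin n → KTree k) (s t : KTree k) :
    vmeet (Fin.snoc T s) (Fin.snoc U t) = Fin.snoc (vmeet T U) (tmeet s t) := by
  funext i
  refine Fin.lastCases ?_ (fun j => ?_) i
  · simp [vmeet]
  · simp [vmeet]

lemma vjoin_snoc {k n : ℕ} (T U : Fin n → KTree k) (s t : KTree k) :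
    vjoin (Fin.snoc T s) (Fin.snoc U t) = Fin.snoc (vjoin T U) (tjoin s t) := by
  funext i
  refine Fin.lastCases ?_ (fun j => ?_) i
  · simp [vjoin]
  · simp [vjoin]

lemma vmeet_zero_left {k n : ℕ} (X : Fin n → KTree k) :
    vmeet (fun _ => none) X = (fun _ => none) := by
  funext i; simp [vmeet]

lemma vjoin_zero_left {k n : ℕ} (X : Fin n → KTree k) :
    vjoin (fun _ => none) X = X := by
  funext i; simp [vjoin]

lemma snoc_zero {k n : ℕ} :
    (Fin.snoc (fun _ => none) none : Fin (n+1) → KTree k) = fun _ => none := by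
  funext i
  refine Fin.lastCases ?_ (fun j => ?_) i <;> simp

lemma obar_snoc {k n : ℕ} (x : Fin n → ℝ) (xn : ℝ) (L : Fin n → Fin k) (b : Fin k)
    (T : Fin n → KTree k) (t : KTree k) :
    obar (Fin.snoc x xn) (Fin.snoc L b) (Fin.snoc T t)
      = obar x L T + gfun k xn b t := by
  unfold obar gfun
  rw [Fin.sum_univ_castSucc]
  simp

lemma neg_nrm_le_obar {k n : ℕ} {x : Fin n → ℝ} (hx : ∀ i, 0 ≤ x i)
    (L : Fin n → Fin k) (T : Fin n → KTree k) :
    -(nrm x) ≤ obar x L T := by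
  have h : ∑ i, (-(x i)) ≤ obar x L T := by
    unfold obar
    apply Finset.sum_le_sum
    intro i _
    rcases hTi : T i with _ | ℓ
    · simpa using hx i
    · simp only [Option.elim]
      split_ifs
      · linarith [hx i]
      · exact le_rfl
  calc -(nrm x) = ∑ i, (-(x i)) := by rw [nrm, ← Finset.sum_neg_distrib]
  _ ≤ obar x L T := h

lemma exists_tight (k : ℕ) (hk : 2 ≤ k) :
    ∀ (n : ℕ) (f : (Fin n → KTree k) → ℝ), KSubmodular f → f (fun _ => none) = 0 →
      ∃ (x : Fin n → ℝ) (L : Fin n → Fin k),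
        (∀ i, 0 ≤ x i) ∧ (∀ T, obar x L T ≤ f T) ∧ IsLeast (Set.range f) (-(nrm x)) := by
  intro n
  induction n with
  | zero =>
      intro f hf h0
      have hT : ∀ T : Fin 0 → KTree k, T = (fun _ => none) := by
        intro T; funext i; exact i.elim0
      refine ⟨fun _ => 0, fun i => i.elim0, fun i => le_refl 0, ?_, ?_, ?_⟩
      · intro T
        have h1 : obar (fun _ => (0:ℝ)) (fun i : Fin 0 => i.elim0) T = 0 := by
          simp [obar]
        rw [h1, hT T, h0]
      · exact ⟨fun _ => none, by simp [nrm, h0]⟩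
      · rintro y ⟨T, rfl⟩
        rw [hT T, h0]; simp [nrm]
  | succ n ih =>
      intro f hf h0
      set Z : Fin n → KTree k := (fun _ => none) with hZ
      -- minimizer of f
      obtain ⟨Tm, -, hTmin⟩ := Finset.exists_min_image Finset.univ f
        ⟨fun _ => none, Finset.mem_univ _⟩
      have hTm' : ∀ T, f Tm ≤ f T := fun T => hTmin T (Finset.mem_univ T)
      set m := f Tm with hm
      -- minimizer of T' ↦ f (snoc T' none)
      obtain ⟨Um, -, hUmin⟩ := Finset.exists_min_image Finset.univ
        (fun T' : Fin n → KTree k => f (Fin.snoc T' none)) ⟨fun _ => none, Finset.mem_univ _⟩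
      have hUm' : ∀ T', f (Fin.snoc Um none) ≤ f (Fin.snoc T' none) :=
        fun T' => hUmin T' (Finset.mem_univ _)
      set M := f (Fin.snoc Um none) with hM
      have hmM : m ≤ M := hTm' _
      set xn := M - m with hxn
      have hxn0 : 0 ≤ xn := by rw [hxn]; linarith
      have hsZ : (Fin.snoc Z none : Fin (n+1) → KTree k) = fun _ => none := by
        rw [hZ]; exact snoc_zero
      have hfZ : f (Fin.snoc Z none) = 0 := by rw [hsZ, h0]
      -- fact (1)
      have h1 : ∀ ℓ : Fin k, -xn ≤ f (Fin.snoc Z (some ℓ)) := by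
        intro ℓ
        have hsub := hf (Fin.snoc Z (some ℓ)) (Fin.snoc Um none)
        rw [vmeet_snoc, vjoin_snoc] at hsub
        rw [hZ] at hsub
        rw [vmeet_zero_left, vjoin_zero_left] at hsub
        rw [← hZ] at hsub
        have e1 : tmeet (some ℓ) (none : KTree k) = none := by simp
        have e2 : tjoin (some ℓ) (none : KTree k) = some ℓ := by simp
        rw [e1, e2] at hsub
        have h2 := hTm' (Fin.snoc Um (some ℓ))
        rw [hfZ] at hsub
        rw [hxn]
        linarith
      -- key facts about a good leaf b
      have key : ∃ b : Fin k, (xn ≤ f (Fin.snoc Z (some b))) ∧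
          (∀ T', m + 2*xn ≤ f (Fin.snoc T' (some b))) ∧
          (∃ T' t, f (Fin.snoc T' t) - gfun k xn b t ≤ m + xn) := by
        have hTm_snoc : Fin.snoc (Fin.init Tm) (Tm (Fin.last n)) = Tm := Fin.snoc_init_self Tm
        rcases ha : Tm (Fin.last n) with _ | a₀
        · -- last coordinate of the minimizer is the root
          have hM_eq : M = m := by
            have hh1 : M ≤ f (Fin.snoc (Fin.init Tm) none) := hUm' _
            have hh2 : Fin.snoc (Fin.init Tm) (none : KTree k) = Tm := by
              rw [← ha]; exact hTm_snoc
            rw [hh2] at hh1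
            exact le_antisymm hh1 hmM
          have hxn_eq : xn = 0 := by rw [hxn, hM_eq]; ring
          obtain ⟨b, hb⟩ : ∃ b : Fin k, 0 ≤ f (Fin.snoc Z (some b)) := by
            by_contra hno
            push_neg at hno
            have hk1 : (0 : ℕ) < k := by omega
            have hk2 : (1 : ℕ) < k := by omega
            set ℓ₀ : Fin k := ⟨0, hk1⟩ with hl0
            set ℓ₁ : Fin k := ⟨1, hk2⟩ with hl1
            have hne : ℓ₀ ≠ ℓ₁ := by
              rw [hl0, hl1]; intro hcc; exact absurd (congrArg Fin.val hcc) (by norm_num)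
            have hsub := hf (Fin.snoc Z (some ℓ₀)) (Fin.snoc Z (some ℓ₁))
            rw [vmeet_snoc, vjoin_snoc, tmeet_some_ne hne, tjoin_some_ne hne] at hsub
            rw [hZ] at hsub
            rw [vmeet_zero_left, vjoin_zero_left] at hsub
            rw [← hZ] at hsub
            rw [hfZ] at hsub
            have c0 := hno ℓ₀
            have c1 := hno ℓ₁
            linarith
          refine ⟨b, by rw [hxn_eq]; exact hb, ?_, ?_⟩
          · intro T'
            have := hTm' (Fin.snoc T' (some b))
            rw [hxn_eq]; linarith
          · refine ⟨Fin.init Tm, none, ?_⟩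
            have hh2 : Fin.snoc (Fin.init Tm) (none : KTree k) = Tm := by
              rw [← ha]; exact hTm_snoc
            rw [hh2, gfun_none]
            linarith
        · -- last coordinate of the minimizer is a leaf a₀
          obtain ⟨b, hb⟩ : ∃ b : Fin k, b ≠ a₀ := by
            have hcard : 1 < Fintype.card (Fin k) := by simpa using (by omega : 1 < k)
            exact Fintype.exists_ne_of_one_lt_card hcard a₀
          have hTm_snoc' : Fin.snoc (Fin.init Tm) (some a₀) = Tm := by
            rw [← ha]; exact hTm_snoc
          have hmeetb : tmeet (some b) (some a₀) = (none : KTree k) := tmeet_some_ne hb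
          have hjoinb : tjoin (some b) (some a₀) = (none : KTree k) := tjoin_some_ne hb
          refine ⟨b, ?_, ?_, ?_⟩
          · -- (2)
            have hsub := hf (Fin.snoc Z (some b)) (Fin.snoc (Fin.init Tm) (some a₀))
            rw [vmeet_snoc, vjoin_snoc, hmeetb, hjoinb] at hsub
            rw [hZ] at hsub
            rw [vmeet_zero_left, vjoin_zero_left] at hsub
            rw [← hZ] at hsub
            rw [hfZ, hTm_snoc'] at hsub
            have h2 := hUm' (Fin.init Tm)
            rw [hxn]
            linarith
          · -- (3)
            intro T'
            have hsub := hf (Fin.snoc T' (some b)) (Fin.snoc (Fin.init Tm) (some a₀))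
            rw [vmeet_snoc, vjoin_snoc, hmeetb, hjoinb, hTm_snoc'] at hsub
            have h2 := hUm' (vmeet T' (Fin.init Tm))
            have h3 := hUm' (vjoin T' (Fin.init Tm))
            rw [hxn]
            linarith
          · -- attainment
            refine ⟨Fin.init Tm, some a₀, ?_⟩
            rw [hTm_snoc', gfun_some, if_neg (fun h => hb h.symm)]
            linarith
      obtain ⟨b, hb2, hb3, T₀, t₀, hatt⟩ := key
      -- the reduced function G
      set G : (Fin n → KTree k) → ℝ := fun T' =>
        Finset.univ.inf' ⟨none, Finset.mem_univ none⟩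
          (fun t : KTree k => f (Fin.snoc T' t) - gfun k xn b t) with hG
      have hGle : ∀ T' t, G T' ≤ f (Fin.snoc T' t) - gfun k xn b t := by
        intro T' t
        rw [hG]
        exact Finset.inf'_le _ (Finset.mem_univ t)
      have hGsub : KSubmodular G := by
        intro T' U'
        obtain ⟨s, -, hs⟩ := Finset.exists_mem_eq_inf'
          (⟨none, Finset.mem_univ none⟩ : (Finset.univ : Finset (KTree k)).Nonempty)
          (fun t : KTree k => f (Fin.snoc T' t) - gfun k xn b t)
        obtain ⟨t, -, ht⟩ := Finset.exists_mem_eq_inf'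
          (⟨none, Finset.mem_univ none⟩ : (Finset.univ : Finset (KTree k)).Nonempty)
          (fun t : KTree k => f (Fin.snoc U' t) - gfun k xn b t)
        have hGT : G T' = f (Fin.snoc T' s) - gfun k xn b s := by rw [hG]; exact hs
        have hGU : G U' = f (Fin.snoc U' t) - gfun k xn b t := by rw [hG]; exact ht
        have hm1 := hGle (vmeet T' U') (tmeet s t)
        have hm2 := hGle (vjoin T' U') (tjoin s t)
        have hm3 := hf (Fin.snoc T' s) (Fin.snoc U' t)
        rw [vmeet_snoc, vjoin_snoc] at hm3
        have hm4 := gfun_super hxn0 b s t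
        linarith
      have hG0 : G Z = 0 := by
        apply le_antisymm
        · have := hGle Z none
          rw [hfZ, gfun_none] at this
          linarith
        · rw [hG]
          apply Finset.le_inf'
          intro t _
          rcases t with _ | ℓ
          · rw [hfZ, gfun_none]; norm_num
          · by_cases hc : ℓ = b
            · subst hc
              rw [gfun_some, if_pos rfl]
              linarith
            · rw [gfun_some, if_neg hc]
              have := h1 ℓ
              linarith
      have hGlb : ∀ T', m + xn ≤ G T' := by
        intro T'
        rw [hG]
        apply Finset.le_inf'
        intro t _
        rcases t with _ | ℓ
        · have := hUm' T'
          rw [gfun_none, hxn]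
          linarith
        · by_cases hc : ℓ = b
          · subst hc
            have := hb3 T'
            rw [gfun_some, if_pos rfl]
            linarith
          · have := hTm' (Fin.snoc T' (some ℓ))
            rw [gfun_some, if_neg hc]
            linarith
      -- apply the induction hypothesis to G
      have hG0' : G (fun _ => none) = 0 := by rw [← hZ]; exact hG0
      obtain ⟨x', L', hx', hle', hleast'⟩ := ih G hGsub hG0'
      have hval : -(nrm x') = m + xn := by
        obtain ⟨T₁, hT₁⟩ := hleast'.1
        have h5 : m + xn ≤ G T₁ := hGlb T₁
        have h6 : -(nrm x') ≤ G T₀ := hleast'.2 ⟨T₀, rfl⟩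
        have h7 := hGle T₀ t₀
        linarith
      refine ⟨Fin.snoc x' xn, Fin.snoc L' b, ?_, ?_, ?_⟩
      · intro i
        refine Fin.lastCases ?_ (fun j => ?_) i
        · simpa using hxn0
        · simpa using hx' j
      · intro T
        obtain ⟨T', t, rfl⟩ : ∃ T' t, T = Fin.snoc T' t :=
          ⟨Fin.init T, T (Fin.last n), (Fin.snoc_init_self T).symm⟩
        rw [obar_snoc]
        have h7 := hGle T' t
        have h8 := hle' T'
        linarith
      · have hnrm : nrm (Fin.snoc x' xn) = nrm x' + xn := by
          simp [nrm, Fin.sum_univ_castSucc]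
        have hmval : -(nrm (Fin.snoc x' xn)) = m := by rw [hnrm]; linarith
        rw [hmval]
        exact ⟨⟨Tm, hm.symm⟩, by rintro y ⟨T, rfl⟩; exact hTm' T⟩

/-- Min-Max-Theorem for `k`-submodular functions:
`min_{T ∈ 𝔗^n} f(T) = max_{(x,L) ∈ U(f)} -‖x‖`. -/
theorem stmt1 (k n : ℕ) (hk : 2 ≤ k) (hn : 1 ≤ n)
    (f : (Fin n → KTree k) → ℝ) (hf : KSubmodular f) (h0 : f (fun _ => none) = 0) :
    ∃ m : ℝ, IsLeast (Set.range f) m ∧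
      (∃ x L, memU f x L ∧ m = -nrm x) ∧
      (∀ x L, memU f x L → -nrm x ≤ m) := by
  obtain ⟨x, L, hx, hle, hleast⟩ := exists_tight k hk n f hf h0
  refine ⟨-(nrm x), hleast, ⟨x, L, ⟨hx, hle⟩, rfl⟩, ?_⟩
  rintro x' L' ⟨hx', hle'⟩
  obtain ⟨T₀, hT₀⟩ := hleast.1
  have ha := neg_nrm_le_obar hx' L' T₀
  have hb := hle' T₀
  linarith [hT₀.ge, hT₀.le]
end

section
/- Let k ≥ 2 and n ≥ 1, and let f : 𝔗^n → ℝ be k-submodular with f(𝟎) = 0. Then for every K ∈ 𝔏^n one has B_K(f) ⊆ U(f) ⊆ U_K(f). -/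
/-- The partial order on `𝔗`: the root `o` is below everything, leaves are incomparable. -/
def tle {k : ℕ} (a b : KTree k) : Prop := a = none ∨ a = b

/-- The componentwise partial order on `𝔗^n`. -/
def vle {k n : ℕ} (T U : Fin n → KTree k) : Prop := ∀ i, tle (T i) (U i)

/-- Membership `(x,L) ∈ U_K(f)`. -/
def memUK {k n : ℕ} (f : (Fin n → KTree k) → ℝ) (K : Fin n → Fin k)
    (x : Fin n → ℝ) (L : Fin n → Fin k) : Prop :=
  (∀ i, 0 ≤ x i) ∧ ∀ T, vle T (fun i => some (K i)) → obar x L T ≤ f T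

/-- Membership `(x,L) ∈ B_K(f)`. -/
def memBK {k n : ℕ} (f : (Fin n → KTree k) → ℝ) (K : Fin n → Fin k)
    (x : Fin n → ℝ) (L : Fin n → Fin k) : Prop :=
  memUK f K x L ∧ obar x L (fun i => some (K i)) = f (fun i => some (K i))

lemma aux_pointwise {k : ℕ} (x : ℝ) (hx : 0 ≤ x) (L Ki : Fin k) (t : KTree k) :
    Option.elim t 0 (fun ℓ => if ℓ = L then x else -x) +
      Option.elim (some Ki) (0:ℝ) (fun ℓ => if ℓ = L then x else -x) ≤
    Option.elim (tmeet t (some Ki)) 0 (fun ℓ => if ℓ = L then x else -x) +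
      Option.elim (tjoin t (some Ki)) 0 (fun ℓ => if ℓ = L then x else -x) := by
  rcases t with _ | p
  · simp [tmeet, tjoin]
  · by_cases hpk : p = Ki
    · subst hpk
      simp [tmeet, tjoin]
    · have hm : tmeet (some p) (some Ki) = none := by
        simp [tmeet, hpk]
      have hj : tjoin (some p) (some Ki) = none := by
        simp [tjoin, hpk]
      rw [hm, hj]
      simp only [Option.elim]
      split_ifs with h1 h2 h2
      · exact absurd (h1.trans h2.symm) hpk
      all_goals linarith

/-- for every `K ∈ 𝔏^n`, `B_K(f) ⊆ U(f) ⊆ U_K(f)`. -/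
theorem stmt3 (k n : ℕ) (hk : 2 ≤ k) (hn : 1 ≤ n)
    (f : (Fin n → KTree k) → ℝ) (hf : KSubmodular f) (h0 : f (fun _ => none) = 0)
    (K : Fin n → Fin k) :
    (∀ x L, memBK f K x L → memU f x L) ∧ (∀ x L, memU f x L → memUK f K x L) := by
  constructor
  · rintro x L ⟨⟨hx, hUK⟩, heq⟩
    refine ⟨hx, fun T => ?_⟩
    set Kv : Fin n → KTree k := fun i => some (K i) with hKv
    have hm : vle (vmeet T Kv) Kv := by
      intro i
      simp only [vmeet, tmeet]
      split
      · exact Or.inr (by assumption)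
      · exact Or.inl rfl
    have hj : vle (vjoin T Kv) Kv := by
      intro i
      rcases hTi : T i with _ | p
      · simp only [vjoin, hTi, tjoin, hKv]
        exact Or.inr rfl
      · simp only [vjoin, hTi, hKv, tjoin]
        by_cases hpk : p = K i
        · subst hpk; simp [tle]
        · simp [hpk, tle]
    have h1 : obar x L (vmeet T Kv) ≤ f (vmeet T Kv) := hUK _ hm
    have h2 : obar x L (vjoin T Kv) ≤ f (vjoin T Kv) := hUK _ hj
    have hsub := hf T Kv
    have h3 : obar x L T + obar x L Kv ≤ obar x L (vmeet T Kv) + obar x L (vjoin T Kv) := by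
      unfold obar
      rw [← Finset.sum_add_distrib, ← Finset.sum_add_distrib]
      refine Finset.sum_le_sum fun i _ => ?_
      exact aux_pointwise (x i) (hx i) (L i) (K i) (T i)
    have heq' : obar x L Kv = f Kv := heq
    linarith
  · rintro x L ⟨hx, hU⟩
    exact ⟨hx, fun T _ => hU T⟩
end

section
/- Let k ≥ 2 and n ≥ 1, and let f : 𝔗^n → ℝ be k-submodular with f(𝟎) = 0. Then for every K ∈ 𝔏^n the base set B_K(f) is non-empty. -/
open Finset

/-- auxiliary: the element of `2^K` indexed by a set `S`. -/
def TSet {k n : ℕ} (K : Fin n → Fin k) (S : Finset (Fin n)) : Fin n → KTree k :=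
  fun i => if i ∈ S then some (K i) else none

lemma vmeet_TSet {k n : ℕ} (K : Fin n → Fin k) (S S' : Finset (Fin n)) :
    vmeet (TSet K S) (TSet K S') = TSet K (S ∩ S') := by
  funext i
  by_cases h : i ∈ S <;> by_cases h' : i ∈ S' <;>
    simp [vmeet, tmeet, TSet, h, h']

lemma vjoin_TSet {k n : ℕ} (K : Fin n → Fin k) (S S' : Finset (Fin n)) :
    vjoin (TSet K S) (TSet K S') = TSet K (S ∪ S') := by
  funext i
  by_cases h : i ∈ S <;> by_cases h' : i ∈ S' <;>
    simp [vjoin, tjoin, TSet, h, h']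

/-- initial segments of `Fin n`. -/
def Cset (n m : ℕ) : Finset (Fin n) := Finset.univ.filter (fun i => i.val < m)

/-- for every `K ∈ 𝔏^n` the base set `B_K(f)` is non-empty. -/
theorem stmt4 (k n : ℕ) (hk : 2 ≤ k) (hn : 1 ≤ n)
    (f : (Fin n → KTree k) → ℝ) (hf : KSubmodular f) (h0 : f (fun _ => none) = 0)
    (K : Fin n → Fin k) :
    ∃ x L, memBK f K x L := by
  set g : Finset (Fin n) → ℝ := fun S => f (TSet K S) with hg
  have gsub : ∀ S S' : Finset (Fin n), g (S ∩ S') + g (S ∪ S') ≤ g S + g S' := by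
    intro S S'
    have := hf (TSet K S) (TSet K S')
    rwa [vmeet_TSet, vjoin_TSet] at this
  have gempty : g ∅ = 0 := by
    have : TSet K (∅ : Finset (Fin n)) = fun _ => none := by
      funext i; simp [TSet]
    simp [hg, this, h0]
  set y : Fin n → ℝ := fun i => g (Cset n (i.val + 1)) - g (Cset n i.val) with hy
  set x : Fin n → ℝ := fun i => |y i| with hx
  set L : Fin n → Fin k := fun i =>
    if 0 ≤ y i then K i else (if (K i).val = 0 then (⟨1, by omega⟩ : Fin k) else ⟨0, by omega⟩)
    with hL
  have hval : ∀ i, (if K i = L i then x i else -x i) = y i := by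
    intro i
    by_cases h : 0 ≤ y i
    · simp [hL, hx, h, abs_of_nonneg h]
    · have hne : K i ≠ L i := by
        simp only [hL, if_neg h]
        by_cases h0' : (K i).val = 0 <;> simp only [if_pos, if_neg, h0', if_true, if_false] <;>
          · intro hc
            apply_fun Fin.val at hc
            simp only [Fin.val_mk] at hc
            omega
      rw [if_neg hne]
      push_neg at h
      rw [hx]
      simp [abs_of_neg h]
  -- obar of `TSet K S` is the sum of `y` over `S`
  have hobar : ∀ S : Finset (Fin n), obar x L (TSet K S) = ∑ i ∈ S, y i := by
    intro S
    rw [obar]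
    rw [← Finset.sum_filter_add_sum_filter_not Finset.univ (fun i => i ∈ S)]
    have h1 : ∀ i ∈ Finset.univ.filter (fun i => i ∈ S),
        Option.elim (TSet K S i) 0 (fun ℓ => if ℓ = L i then x i else -x i) = y i := by
      intro i hi
      simp only [mem_filter] at hi
      simp only [TSet, if_pos hi.2, Option.elim]
      exact hval i
    have h2 : ∀ i ∈ Finset.univ.filter (fun i => ¬ i ∈ S),
        Option.elim (TSet K S i) 0 (fun ℓ => if ℓ = L i then x i else -x i) = 0 := by
      intro i hi
      simp only [mem_filter] at hi
      simp [TSet, if_neg hi.2]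
    rw [Finset.sum_congr rfl h1, Finset.sum_congr rfl h2, Finset.sum_const_zero, add_zero]
    congr 1
    simp
  -- telescoping sum
  have htel : ∀ S : Finset (Fin n),
      ∑ i : Fin n, (g (S ∩ Cset n (i.val + 1)) - g (S ∩ Cset n i.val)) = g S := by
    intro S
    rw [Fin.sum_univ_eq_sum_range (fun m => g (S ∩ Cset n (m + 1)) - g (S ∩ Cset n m)) n,
      Finset.sum_range_sub (fun m => g (S ∩ Cset n m))]
    have hSn : S ∩ Cset n n = S := by
      ext j; simp [Cset, j.isLt]
    have hS0 : S ∩ Cset n 0 = ∅ := by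
      ext j; simp [Cset]
    rw [hSn, hS0, gempty, sub_zero]
  -- the greedy inequality
  have hkey : ∀ S : Finset (Fin n), ∑ i ∈ S, y i ≤ g S := by
    intro S
    rw [← htel S]
    rw [← Finset.sum_filter_add_sum_filter_not Finset.univ (fun i => i ∈ S)
      (fun i => g (S ∩ Cset n (i.val + 1)) - g (S ∩ Cset n i.val))]
    have hsum : ∑ i ∈ S, y i = ∑ i ∈ Finset.univ.filter (fun i => i ∈ S), y i := by
      congr 1; ext j; simp
    rw [hsum]
    have hterm2 : ∀ i ∈ Finset.univ.filter (fun i => ¬ i ∈ S),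
        g (S ∩ Cset n (i.val + 1)) - g (S ∩ Cset n i.val) = 0 := by
      intro i hi
      simp only [mem_filter] at hi
      have : S ∩ Cset n (i.val + 1) = S ∩ Cset n i.val := by
        ext j
        simp only [mem_inter, Cset, mem_filter, mem_univ, true_and, and_congr_right_iff]
        intro hjS
        constructor
        · intro hj
          rcases Nat.lt_succ_iff_lt_or_eq.mp hj with h' | h'
          · exact h'
          · exact absurd (show j = i from Fin.ext h' ▸ rfl) (by
              intro hji; exact hi.2 (hji ▸ hjS))
        · omega
      rw [this, sub_self]
    rw [Finset.sum_congr rfl hterm2, Finset.sum_const_zero, add_zero]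
    apply Finset.sum_le_sum
    intro i hi
    simp only [mem_filter] at hi
    -- submodularity step
    have hcap : Cset n i.val ∩ (S ∩ Cset n (i.val + 1)) = S ∩ Cset n i.val := by
      ext j
      simp only [mem_inter, Cset, mem_filter, mem_univ, true_and]
      constructor
      · rintro ⟨h1, h2, h3⟩; exact ⟨h2, h1⟩
      · rintro ⟨h1, h2⟩; exact ⟨h2, h1, by omega⟩
    have hcup : Cset n i.val ∪ (S ∩ Cset n (i.val + 1)) = Cset n (i.val + 1) := by
      ext j
      simp only [mem_union, mem_inter, Cset, mem_filter, mem_univ, true_and]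
      constructor
      · rintro (h1 | ⟨h1, h2⟩)
        · omega
        · exact h2
      · intro hj
        by_cases hji : j.val < i.val
        · exact Or.inl hji
        · right
          have : j = i := Fin.ext (by omega)
          exact ⟨this ▸ hi.2, hj⟩
    have := gsub (Cset n i.val) (S ∩ Cset n (i.val + 1))
    rw [hcap, hcup] at this
    have hyi : y i = g (Cset n (i.val + 1)) - g (Cset n i.val) := rfl
    rw [hyi]
    linarith
  refine ⟨x, L, ⟨⟨fun i => abs_nonneg _, ?_⟩, ?_⟩⟩
  · intro T hT
    set S : Finset (Fin n) := Finset.univ.filter (fun i => T i = some (K i)) with hS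
    have hTS : T = TSet K S := by
      funext i
      rcases hT i with h | h
      · have : ¬ i ∈ S := by simp [hS, h]
        simp [TSet, this, h]
      · have : i ∈ S := by simp [hS, h]
        simp [TSet, this, h]
    rw [hTS, hobar]
    exact hkey S
  · have hKuniv : (fun i => some (K i)) = TSet K Finset.univ := by
      funext i; simp [TSet]
    rw [hKuniv, hobar]
    have := htel Finset.univ
    simp only [Finset.univ_inter] at this
    exact this
end

section
/- Let k ≥ 2 and n ≥ 1, let f : 𝔗^n → ℝ be k-submodular with f(𝟎) = 0, and let (x,L) ∈ U(f). Then the set 𝔉(x,L) of (x,L)-tight elements is closed under ⊓ and ⊔, and for all T, U ∈ 𝔉(x,L) one has \overline{(x,L)}(T ⊓ U) + \overline{(x,L)}(T ⊔ U) = \overline{(x,L)}(T) + \overline{(x,L)}(U) (i.e. the restriction of \overline{(x,L)} to 𝔉(x,L) is k-modular). -/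
/-- `T` is `(x,L)`-tight. -/
def Tight {k n : ℕ} (f : (Fin n → KTree k) → ℝ) (x : Fin n → ℝ) (L : Fin n → Fin k)
    (T : Fin n → KTree k) : Prop :=
  obar x L T = f T

/-- the set `𝔉(x,L)` of `(x,L)`-tight elements is closed under `⊓` and `⊔`,
and `\overline{(x,L)}` restricted to `𝔉(x,L)` is `k`-modular. -/
theorem stmt6 (k n : ℕ) (hk : 2 ≤ k) (hn : 1 ≤ n)
    (f : (Fin n → KTree k) → ℝ) (hf : KSubmodular f) (h0 : f (fun _ => none) = 0)
    (x : Fin n → ℝ) (L : Fin n → Fin k) (hU : memU f x L) :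
    ∀ T U, Tight f x L T → Tight f x L U →
      Tight f x L (vmeet T U) ∧ Tight f x L (vjoin T U) ∧
      obar x L (vmeet T U) + obar x L (vjoin T U) = obar x L T + obar x L U := by
  intro T U hT hUt
  have key : ∀ i, (Option.elim (T i) 0 (fun ℓ => if ℓ = L i then x i else -x i) : ℝ) +
      Option.elim (U i) 0 (fun ℓ => if ℓ = L i then x i else -x i) ≤
      Option.elim (tmeet (T i) (U i)) 0 (fun ℓ => if ℓ = L i then x i else -x i) +
      Option.elim (tjoin (T i) (U i)) 0 (fun ℓ => if ℓ = L i then x i else -x i) := by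
    intro i
    have hx := hU.1 i
    rcases h : T i with _ | p <;> rcases h' : U i with _ | q <;>
      simp [tmeet, tjoin]
    by_cases hpq : p = q
    · simp [hpq]
    · simp [hpq, Option.some_inj]
      by_cases hp : p = L i <;> by_cases hq : q = L i <;>
        simp [hp, hq] <;> first | (exfalso; exact hpq (hp.trans hq.symm)) | linarith
  have hsum : obar x L T + obar x L U ≤ obar x L (vmeet T U) + obar x L (vjoin T U) := by
    unfold obar vmeet vjoin
    rw [← Finset.sum_add_distrib, ← Finset.sum_add_distrib]
    exact Finset.sum_le_sum fun i _ => key i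
  have h1 := hf T U
  unfold Tight at *
  have h2 := hU.2 (vmeet T U)
  have h3 := hU.2 (vjoin T U)
  constructor
  · linarith
  constructor
  · linarith
  · linarith
end

section
/- Let k ≥ 2 and n ≥ 1, let f : 𝔗^n → ℝ be k-submodular with f(𝟎) = 0, and let (x,L) ∈ U(f). If T, U ∈ 𝔉(x,L) and i ∈ supp(x) are such that T_i and U_i are both leaves different from L_i, then T_i = U_i. -/
/-- if `T, U ∈ 𝔉(x,L)` and `i ∈ supp(x)` are such that `T_i` and `U_i` are
leaves different from `L_i`, then `T_i = U_i`. -/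
theorem stmt7 (k n : ℕ) (hk : 2 ≤ k) (hn : 1 ≤ n)
    (f : (Fin n → KTree k) → ℝ) (hf : KSubmodular f) (h0 : f (fun _ => none) = 0)
    (x : Fin n → ℝ) (L : Fin n → Fin k) (hU : memU f x L)
    (T U : Fin n → KTree k) (hT : Tight f x L T) (hUt : Tight f x L U)
    (i : Fin n) (hi : 0 < x i)
    (hTi : ∃ p : Fin k, T i = some p ∧ p ≠ L i)
    (hUi : ∃ q : Fin k, U i = some q ∧ q ≠ L i) :
    T i = U i := by
  obtain ⟨p, hTp, hpL⟩ := hTi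
  obtain ⟨q, hUq, hqL⟩ := hUi
  by_contra hne
  have hpq : p ≠ q := by
    intro h; apply hne; rw [hTp, hUq, h]
  set g : Fin n → KTree k → ℝ :=
    fun j t => Option.elim t 0 (fun ℓ => if ℓ = L j then x j else -x j) with hg
  have hobar : ∀ S, obar x L S = ∑ j, g j (S j) := fun S => rfl
  have hle : ∀ j (a b : KTree k), g j a + g j b ≤ g j (tmeet a b) + g j (tjoin a b) := by
    intro j a b
    have hx := hU.1 j
    match a, b with
    | none, none => simp [tmeet, tjoin, g]
    | none, some b => simp [tmeet, tjoin, g]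
    | some a, none => simp [tmeet, tjoin, g]
    | some a, some b =>
      by_cases hab : a = b
      · simp [tmeet, tjoin, hab, g]
      · have hab' : (some a : KTree k) ≠ some b := by simpa using hab
        simp only [tmeet, tjoin, if_neg hab', if_neg hab, g, Option.elim]
        by_cases ha : a = L j <;> by_cases hb : b = L j <;>
          simp [ha, hb] <;> first | linarith | (exact absurd (ha.trans hb.symm) hab)
  have hsum : obar x L T + obar x L U < obar x L (vmeet T U) + obar x L (vjoin T U) := by
    rw [hobar, hobar, hobar, hobar, ← Finset.sum_add_distrib, ← Finset.sum_add_distrib]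
    apply Finset.sum_lt_sum
    · intro j _; exact hle j (T j) (U j)
    · refine ⟨i, Finset.mem_univ i, ?_⟩
      show g i (T i) + g i (U i) < g i (tmeet (T i) (U i)) + g i (tjoin (T i) (U i))
      rw [hTp, hUq]
      have hab' : (some p : KTree k) ≠ some q := by simpa using hpq
      simp only [tmeet, tjoin, if_neg hab', if_neg hpq, g, Option.elim,
        if_neg hpL, if_neg hqL]
      linarith
  have h1 : obar x L (vmeet T U) ≤ f (vmeet T U) := hU.2 _
  have h2 : obar x L (vjoin T U) ≤ f (vjoin T U) := hU.2 _
  have h3 := hf T U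
  have hT' : obar x L T = f T := hT
  have hU' : obar x L U = f U := hUt
  linarith
end

section
/- Let k ≥ 2 and n ≥ 1, let f : 𝔗^n → ℝ be k-submodular with f(𝟎) = 0, and let (x,L) ∈ U(f). Let T ∈ 𝔉(x,L) and i ∈ S(x,L) be such that T_i ≤ L̄_i. If j ∈ {1,…,n} is such that N((x,L),i)_j is a leaf, then T_j ≤ N((x,L),i)_j. -/
/-- `N` is the intersection `⊓` of all `(x,L)`-tight elements `T` with `T i = some ℓbar`,
characterized as the greatest lower bound of this (finite, non-empty) set. -/
def IsMeetOfTight {k n : ℕ} (f : (Fin n → KTree k) → ℝ) (x : Fin n → ℝ) (L : Fin n → Fin k)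
    (i : Fin n) (ℓbar : Fin k) (N : Fin n → KTree k) : Prop :=
  (∀ T, Tight f x L T → T i = some ℓbar → vle N T) ∧
  (∀ W, (∀ T, Tight f x L T → T i = some ℓbar → vle W T) → vle W N)

lemma obar_super {k n : ℕ} (x : Fin n → ℝ) (hx : ∀ i, 0 ≤ x i) (L : Fin n → Fin k)
    (T U : Fin n → KTree k) :
    obar x L T + obar x L U ≤ obar x L (vmeet T U) + obar x L (vjoin T U) := by
  unfold obar
  rw [← Finset.sum_add_distrib, ← Finset.sum_add_distrib]
  apply Finset.sum_le_sum
  intro m _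
  simp only [vmeet, vjoin]
  rcases hTm : T m with _ | a <;> rcases hUm : U m with _ | b <;>
    simp [tmeet, tjoin, Option.elim]
  by_cases hab : a = b
  · simp [hab]
  · simp [hab, Option.elim]
    rcases eq_or_ne a (L m) with h | h <;> rcases eq_or_ne b (L m) with h' | h' <;>
      simp [h, h'] <;> first | (exfalso; exact hab (h.trans h'.symm)) | linarith [hx m]

/-- let `T ∈ 𝔉(x,L)` and `i ∈ S(x,L)` with `T_i ≤ L̄_i`; if `N((x,L),i)_j`
is a leaf then `T_j ≤ N((x,L),i)_j`. -/
theorem stmt8 (k n : ℕ) (hk : 2 ≤ k) (hn : 1 ≤ n)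
    (f : (Fin n → KTree k) → ℝ) (hf : KSubmodular f) (h0 : f (fun _ => none) = 0)
    (x : Fin n → ℝ) (L : Fin n → Fin k) (hU : memU f x L)
    (i : Fin n) (hi : 0 < x i) (ℓbar : Fin k) (hℓbar : ℓbar ≠ L i)
    (hiS : ∃ W, Tight f x L W ∧ W i = some ℓbar)
    (N : Fin n → KTree k) (hN : IsMeetOfTight f x L i ℓbar N)
    (T : Fin n → KTree k) (hT : Tight f x L T) (hTi : tle (T i) (some ℓbar))
    (j : Fin n) (hNj : ∃ p : Fin k, N j = some p) :
    tle (T j) (N j) := by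
  obtain ⟨W, hW, hWi⟩ := hiS
  obtain ⟨p, hp⟩ := hNj
  -- the join of T and W is tight
  have h1 := obar_super x hU.1 L T W
  have h2 := hf T W
  have h3 := hU.2 (vmeet T W)
  have h4 := hU.2 (vjoin T W)
  have hJtight : Tight f x L (vjoin T W) := by
    unfold Tight at *
    linarith
  have hJi : (vjoin T W) i = some ℓbar := by
    rcases hTi with h | h <;> simp [vjoin, h, hWi, tjoin]
  have hNJ := hN.1 (vjoin T W) hJtight hJi j
  have hNW := hN.1 W hW hWi j
  rw [hp] at hNJ hNW
  have hJj : (vjoin T W) j = some p := by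
    rcases hNJ with h | h
    · exact absurd h (by simp)
    · exact h.symm
  have hWj : W j = some p := by
    rcases hNW with h | h
    · exact absurd h (by simp)
    · exact h.symm
  rcases hTj : T j with _ | q
  · exact Or.inl rfl
  · right
    rw [hp]
    simp [vjoin, hTj, hWj, tjoin] at hJj
    by_cases hqp : q = p
    · rw [hqp]
    · simp [hqp] at hJj
end

section
/- Let k ≥ 2 and n ≥ 1, let f : 𝔗^n → ℝ be k-submodular with f(𝟎) = 0, and let (x,L) ∈ U(f). Let i ∈ S(x,L) and j ∈ supp(x). If N((x,L),i)_j = L_j, then there exists α > 0 such that (x − α(χ_i + χ_j), L) ∈ U(f). -/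
/-- The characteristic vector `χ_i ∈ ℝ^n`. -/
def chi {n : ℕ} (i : Fin n) : Fin n → ℝ := fun m => if m = i then 1 else 0

def sg {k n : ℕ} (L : Fin n → Fin k) (T : Fin n → KTree k) (m : Fin n) : ℝ :=
  Option.elim (T m) 0 (fun ℓ => if ℓ = L m then 1 else -1)

lemma sg_bounds {k n : ℕ} (L : Fin n → Fin k) (T : Fin n → KTree k) (m : Fin n) :
    -1 ≤ sg L T m ∧ sg L T m ≤ 1 := by
  unfold sg; cases T m <;> simp
  split <;> norm_num

lemma obar_eq {k n : ℕ} (y : Fin n → ℝ) (L : Fin n → Fin k) (T : Fin n → KTree k) :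
    obar y L T = ∑ m, y m * sg L T m := by
  unfold obar sg
  apply Finset.sum_congr rfl
  intro m _
  cases T m <;> simp [mul_ite, mul_one, mul_neg]

lemma sg_ineq {k n : ℕ} (L : Fin n → Fin k) (T U : Fin n → KTree k) (m : Fin n) :
    sg L T m + sg L U m ≤ sg L (vmeet T U) m + sg L (vjoin T U) m := by
  unfold sg vmeet vjoin
  cases hT : T m with
  | none => cases hU : U m <;> simp [tmeet, tjoin]
  | some p =>
    cases hU : U m with
    | none => simp [tmeet, tjoin]
    | some q =>
      by_cases h : p = q
      · subst h; simp [tmeet, tjoin]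
      · simp [tmeet, tjoin, h, Option.some.injEq]
        split_ifs with h1 h2 h2
        · exact absurd (h1.trans h2.symm) h
        all_goals norm_num


/-- let `i ∈ S(x,L)` and `j ∈ supp(x)`; if `N((x,L),i)_j = L_j`
then there is `α > 0` with `(x - α(χ_i + χ_j), L) ∈ U(f)`. -/
theorem stmt9 (k n : ℕ) (hk : 2 ≤ k) (hn : 1 ≤ n)
    (f : (Fin n → KTree k) → ℝ) (hf : KSubmodular f) (h0 : f (fun _ => none) = 0)
    (x : Fin n → ℝ) (L : Fin n → Fin k) (hU : memU f x L)
    (i : Fin n) (hi : 0 < x i) (ℓbar : Fin k) (hℓbar : ℓbar ≠ L i)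
    (hiS : ∃ W, Tight f x L W ∧ W i = some ℓbar)
    (N : Fin n → KTree k) (hN : IsMeetOfTight f x L i ℓbar N)
    (j : Fin n) (hj : 0 < x j) (hNj : N j = some (L j)) :
    ∃ α : ℝ, 0 < α ∧ memU f (fun m => x m - α * (chi i m + chi j m)) L := by
  classical
  obtain ⟨hx0, hxf⟩ := hU
  obtain ⟨W, hWt, hWi⟩ := hiS
  -- From N ≤ T for tight T with T i = ℓbar : T j = some (L j)
  have hNle : ∀ T, Tight f x L T → T i = some ℓbar → T j = some (L j) := by
    intro T hTt hTi
    rcases hN.1 T hTt hTi j with h | h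
    · rw [hNj] at h; exact absurd h (by simp)
    · rw [← h, hNj]
  have hWj : W j = some (L j) := hNle W hWt hWi
  -- tightness of join and coordinatewise equality
  have chain : ∀ T U, Tight f x L T → Tight f x L U →
      Tight f x L (vjoin T U) ∧
      ∀ m, x m * (sg L T m + sg L U m)
          = x m * (sg L (vmeet T U) m + sg L (vjoin T U) m) := by
    intro T U hTt hUt
    have hsum : obar x L T + obar x L U
        ≤ obar x L (vmeet T U) + obar x L (vjoin T U) := by
      rw [obar_eq, obar_eq, obar_eq, obar_eq, ← Finset.sum_add_distrib,
        ← Finset.sum_add_distrib]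
      apply Finset.sum_le_sum
      intro m _
      have h1 := sg_ineq L T U m
      nlinarith [hx0 m]
    have hsub := hf T U
    have hm := hxf (vmeet T U)
    have hjn := hxf (vjoin T U)
    have hTe : obar x L T = f T := hTt
    have hUe : obar x L U = f U := hUt
    have heq : obar x L T + obar x L U
        = obar x L (vmeet T U) + obar x L (vjoin T U) := by linarith
    constructor
    · show obar x L (vjoin T U) = f (vjoin T U)
      linarith
    · intro m
      have hz : ∑ p, (x p * (sg L (vmeet T U) p + sg L (vjoin T U) p)
          - x p * (sg L T p + sg L U p)) = 0 := by
        rw [Finset.sum_sub_distrib]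
        have e1 := obar_eq x L T
        have e2 := obar_eq x L U
        have e3 := obar_eq x L (vmeet T U)
        have e4 := obar_eq x L (vjoin T U)
        have : (∑ p, x p * (sg L (vmeet T U) p + sg L (vjoin T U) p))
            = ∑ p, x p * (sg L T p + sg L U p) := by
          have l1 : (∑ p, x p * (sg L (vmeet T U) p + sg L (vjoin T U) p))
              = (∑ p, x p * sg L (vmeet T U) p) + ∑ p, x p * sg L (vjoin T U) p := by
            rw [← Finset.sum_add_distrib]; apply Finset.sum_congr rfl; intros; ring
          have l2 : (∑ p, x p * (sg L T p + sg L U p))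
              = (∑ p, x p * sg L T p) + ∑ p, x p * sg L U p := by
            rw [← Finset.sum_add_distrib]; apply Finset.sum_congr rfl; intros; ring
          rw [l1, l2, ← e1, ← e2, ← e3, ← e4]; linarith
        rw [this, sub_self]
      have hnn : ∀ p ∈ Finset.univ,
          0 ≤ x p * (sg L (vmeet T U) p + sg L (vjoin T U) p)
            - x p * (sg L T p + sg L U p) := by
        intro p _
        have h1 := sg_ineq L T U p
        nlinarith [hx0 p]
      have := (Finset.sum_eq_zero_iff_of_nonneg hnn).1 hz m (Finset.mem_univ m)
      linarith
  -- main: tight elements have sg sum ≥ 0 at i, j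
  have main : ∀ T, Tight f x L T → 0 ≤ sg L T i + sg L T j := by
    intro T hTt
    cases hTi : T i with
    | none =>
      have hsTi : sg L T i = 0 := by unfold sg; rw [hTi]; rfl
      cases hTj : T j with
      | none =>
        have : sg L T j = 0 := by unfold sg; rw [hTj]; rfl
        rw [hsTi, this]; norm_num
      | some q =>
        by_cases h2 : q = L j
        · have : sg L T j = 1 := by unfold sg; rw [hTj]; simp [h2]
          rw [hsTi, this]; norm_num
        · exfalso
          have hjt := (chain T W hTt hWt).1
          have hji : (vjoin T W) i = some ℓbar := by
            show tjoin (T i) (W i) = some ℓbar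
            rw [hTi, hWi]; rfl
          have := hNle (vjoin T W) hjt hji
          have hjj : (vjoin T W) j = none := by
            show tjoin (T j) (W j) = none
            rw [hTj, hWj]; simp [tjoin, h2]
          rw [hjj] at this; exact absurd this (by simp)
    | some p =>
      by_cases h1 : p = L i
      · have : sg L T i = 1 := by unfold sg; rw [hTi]; simp [h1]
        have hb := (sg_bounds L T j).1
        rw [this]; linarith
      · have hb : p = ℓbar := by
          by_contra hpb
          have hco := (chain T W hTt hWt).2 i
          have e1 : sg L T i = -1 := by unfold sg; rw [hTi]; simp [h1]
          have e2 : sg L W i = -1 := by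
            unfold sg; rw [hWi]; simp [hℓbar]
          have e3 : sg L (vmeet T W) i = 0 := by
            unfold sg
            show Option.elim (tmeet (T i) (W i)) 0 _ = 0
            rw [hTi, hWi]; simp [tmeet, hpb]
          have e4 : sg L (vjoin T W) i = 0 := by
            unfold sg
            show Option.elim (tjoin (T i) (W i)) 0 _ = 0
            rw [hTi, hWi]; simp [tjoin, hpb]
          rw [e1, e2, e3, e4] at hco
          norm_num at hco
          linarith
        have hTj : T j = some (L j) := hNle T hTt (by rw [hTi, hb])
        have e1 : sg L T i = -1 := by unfold sg; rw [hTi]; simp [h1]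
        have e2 : sg L T j = 1 := by unfold sg; rw [hTj]; simp
        rw [e1, e2]; norm_num
  -- shift formula
  have key : ∀ (T : Fin n → KTree k) (a : Fin n),
      (∑ m, (if m = a then (1:ℝ) else 0) * sg L T m) = sg L T a := by
    intro T a
    rw [Finset.sum_eq_single a]
    · simp
    · intro b _ hb; simp [hb]
    · intro h; exact absurd (Finset.mem_univ a) h
  have hshift : ∀ (α : ℝ) (T : Fin n → KTree k),
      obar (fun m => x m - α * (chi i m + chi j m)) L T
        = obar x L T - α * (sg L T i + sg L T j) := by
    intro α T
    rw [obar_eq, obar_eq]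
    have step : ∀ m ∈ Finset.univ, (x m - α * (chi i m + chi j m)) * sg L T m
        = x m * sg L T m - α * ((if m = i then (1:ℝ) else 0) * sg L T m)
          - α * ((if m = j then (1:ℝ) else 0) * sg L T m) := by
      intro m _; simp only [chi]; ring
    rw [Finset.sum_congr rfl step, Finset.sum_sub_distrib, Finset.sum_sub_distrib,
      ← Finset.mul_sum, ← Finset.mul_sum, key T i, key T j]
    ring
  -- choose α
  set Bad : Finset (Fin n → KTree k) :=
    Finset.univ.filter (fun T => sg L T i + sg L T j < 0) with hBad
  have slack_pos : ∀ T ∈ Bad, 0 < (f T - obar x L T) / 2 := by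
    intro T hT
    have hσT : sg L T i + sg L T j < 0 := (Finset.mem_filter.mp hT).2
    have hnt : obar x L T ≠ f T := by
      intro h; exact absurd (main T h) (by linarith)
    have := lt_of_le_of_ne (hxf T) hnt
    linarith
  have sg2 : ∀ T : Fin n → KTree k, -2 ≤ sg L T i + sg L T j := by
    intro T
    have h1 := (sg_bounds L T i).1
    have h2 := (sg_bounds L T j).1
    linarith
  by_cases hne : Bad.Nonempty
  · set β : ℝ := Bad.inf' hne (fun T => (f T - obar x L T) / 2) with hβ
    have hβpos : 0 < β := by
      rw [hβ, Finset.lt_inf'_iff]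
      exact slack_pos
    have hβle : ∀ T ∈ Bad, β ≤ (f T - obar x L T) / 2 := fun T hT =>
      Finset.inf'_le _ hT
    set α := min (min (x i / 2) (x j / 2)) β with hα
    have hαpos : 0 < α := lt_min (lt_min (by linarith) (by linarith)) hβpos
    have hαi : α ≤ x i / 2 := (min_le_left _ _).trans (min_le_left _ _)
    have hαj : α ≤ x j / 2 := (min_le_left _ _).trans (min_le_right _ _)
    refine ⟨α, hαpos, ?_, ?_⟩
    · intro m
      simp only [chi]
      split_ifs with e1 e2 e2
      · subst e1; linarith
      · subst e1; linarith
      · subst e2; linarith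
      · have := hx0 m; linarith
    · intro T
      rw [hshift]
      by_cases hσ : 0 ≤ sg L T i + sg L T j
      · have := mul_nonneg hαpos.le hσ
        have := hxf T
        linarith
      · push_neg at hσ
        have hTB : T ∈ Bad := Finset.mem_filter.mpr ⟨Finset.mem_univ _, hσ⟩
        have h1 := hβle T hTB
        have h2 : α ≤ β := min_le_right _ _
        have h3 := mul_le_mul_of_nonneg_left (sg2 T) hαpos.le
        linarith
  · have hall : ∀ T : Fin n → KTree k, 0 ≤ sg L T i + sg L T j := by
      intro T
      by_contra h
      exact hne ⟨T, Finset.mem_filter.mpr ⟨Finset.mem_univ _, lt_of_not_ge h⟩⟩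
    set α := min (x i / 2) (x j / 2) with hα
    have hαpos : 0 < α := lt_min (by linarith) (by linarith)
    have hαi : α ≤ x i / 2 := min_le_left _ _
    have hαj : α ≤ x j / 2 := min_le_right _ _
    refine ⟨α, hαpos, ?_, ?_⟩
    · intro m
      simp only [chi]
      split_ifs with e1 e2 e2
      · subst e1; linarith
      · subst e1; linarith
      · subst e2; linarith
      · have := hx0 m; linarith
    · intro T
      rw [hshift]
      have := mul_nonneg hαpos.le (hall T)
      have := hxf T
      linarith
end

section
/- (Integer Min-Max.) Let k ≥ 2 and n ≥ 1, and let f : 𝔗^n → ℤ be k-submodular with f(𝟎) = 0. Then min_{T ∈ 𝔗^n} f(T) = max_{(x,L) ∈ IU(f)} −‖x‖; that is, there exists (x,L) ∈ IU(f) with min_{T ∈ 𝔗^n} f(T) = −‖x‖, and −‖x'‖ ≤ min_{T ∈ 𝔗^n} f(T) for every (x',L') ∈ IU(f). -/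
/-- `f : 𝔗^n → ℤ` is `k`-submodular. -/
def KSubmodularZ {k n : ℕ} (f : (Fin n → KTree k) → ℤ) : Prop :=
  ∀ T U, f (vmeet T U) + f (vjoin T U) ≤ f T + f U

/-- Membership `(x,L) ∈ IU(f) = U(f) ⊓ (ℤ_{≥0}^n × 𝔏^n)` for integer-valued `f`. -/
def memIU {k n : ℕ} (f : (Fin n → KTree k) → ℤ) (x : Fin n → ℝ) (L : Fin n → Fin k) : Prop :=
  (∀ i, 0 ≤ x i) ∧ (∀ i, ∃ m : ℤ, x i = (m : ℝ)) ∧ ∀ T, obar x L T ≤ (f T : ℝ)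

/-- Integer characteristic function `χ_{i,ℓ}`. -/
def chiI {k n : ℕ} (i : Fin n) (ℓ : Fin k) (T : Fin n → KTree k) : ℤ :=
  Option.elim (T i) 0 (fun a => if a = ℓ then 1 else -1)

/-- Integer version of `obar` for natural-number weights. -/
def obarZ {k n : ℕ} (x : Fin n → ℕ) (L : Fin n → Fin k) (T : Fin n → KTree k) : ℤ :=
  ∑ i, Option.elim (T i) 0 (fun a => if a = L i then (x i : ℤ) else -(x i : ℤ))

lemma chi_super {k n : ℕ} (i : Fin n) (ℓ : Fin k) (T U : Fin n → KTree k) :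
    chiI i ℓ T + chiI i ℓ U ≤ chiI i ℓ (vmeet T U) + chiI i ℓ (vjoin T U) := by
  unfold chiI vmeet vjoin
  rcases hT : T i with _ | p <;> rcases hU : U i with _ | q
  · simp [tmeet, tjoin]
  · simp [tmeet, tjoin]
  · simp [tmeet, tjoin]
  · by_cases hpq : p = q
    · subst hpq; simp [tmeet, tjoin]
    · have h1 : tmeet (some p) (some q) = (none : KTree k) := by
        simp [tmeet, hpq]
      have h2 : tjoin (some p) (some q) = (none : KTree k) := by
        simp [tjoin, hpq]
      rw [h1, h2]
      simp only [Option.elim]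
      by_cases hp : p = ℓ <;> by_cases hq : q = ℓ <;> simp [hp, hq] <;> omega

lemma obar_cast {k n : ℕ} (x : Fin n → ℕ) (L : Fin n → Fin k) (T : Fin n → KTree k) :
    obar (fun i => (x i : ℝ)) L T = ((obarZ x L T : ℤ) : ℝ) := by
  unfold obar obarZ
  push_cast
  refine Finset.sum_congr rfl fun i _ => ?_
  cases T i with
  | none => simp
  | some a => by_cases h : a = L i <;> simp [h]

/-- Key inductive lemma: if `f` is `k`-submodular, `f(𝟎)=0`, `min f = -N`, and `L` is such
that for every coordinate `j` some minimizer of `f` avoids `L j` at `j`, then there is an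
integer vector `x ≥ 0` with `∑ x = N` and `obarZ x L ≤ f`. -/
lemma key_lemma {k n : ℕ} :
    ∀ N : ℕ, ∀ f : (Fin n → KTree k) → ℤ, ∀ L : Fin n → Fin k,
      KSubmodularZ f → f (fun _ => none) = 0 →
      (∀ T, -(N : ℤ) ≤ f T) →
      (∃ T, f T = -(N : ℤ)) →
      (∀ j, ∃ T, f T = -(N : ℤ) ∧ T j ≠ some (L j)) →
      ∃ x : Fin n → ℕ, (∑ i, x i) = N ∧ ∀ T, obarZ x L T ≤ f T := by
  intro N
  induction N with
  | zero =>
    intro f L hf h0 hbd hmin hstar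
    refine ⟨fun _ => 0, by simp, fun T => ?_⟩
    have hz : obarZ (fun _ => 0) L T = 0 := by
      unfold obarZ
      refine Finset.sum_eq_zero fun i _ => ?_
      cases T i <;> simp
    have := hbd T
    rw [hz]
    simpa using this
  | succ N IH =>
    intro f L hf h0 hbd hmin hstar
    have hb : ∀ T, -((N : ℤ) + 1) ≤ f T := by
      intro T; have := hbd T; push_cast at this; linarith
    obtain ⟨T₁, hT₁⟩ := hmin
    have hT₁' : f T₁ = -((N : ℤ) + 1) := by push_cast at hT₁; linarith
    -- the set of minimizers
    set S : Finset (Fin n → KTree k) :=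
      Finset.univ.filter (fun T => f T = -((N : ℤ) + 1)) with hSdef
    have hSne : S.Nonempty := ⟨T₁, by simp [hSdef, hT₁']⟩
    obtain ⟨M, hMS, hMmin⟩ :=
      S.exists_min_image (fun T => (Finset.univ.filter (fun i => T i ≠ none)).card) hSne
    have hfM : f M = -((N : ℤ) + 1) := by
      simpa [hSdef] using hMS
    -- all minimizers agree with M on the support of M
    have hagree : ∀ T, f T = -((N : ℤ) + 1) → ∀ j, M j ≠ none → T j = M j := by
      intro T hT j hMj
      by_contra hne
      have h2 := hf M T
      have ha := hb (vmeet M T)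
      have hc := hb (vjoin M T)
      have hW : f (vmeet M T) = -((N : ℤ) + 1) := by linarith
      have hWS : vmeet M T ∈ S := by simp [hSdef, hW]
      have hsub : (Finset.univ.filter (fun i => vmeet M T i ≠ none)) ⊂
          (Finset.univ.filter (fun i => M i ≠ none)) := by
        constructor
        · intro j' hj'
          simp only [Finset.mem_filter, Finset.mem_univ, true_and] at hj' ⊢
          by_cases h : M j' = T j'
          · simpa [vmeet, tmeet, h] using hj'
          · exact absurd (by simp [vmeet, tmeet, h]) hj'
        · intro hcon
          have hj : j ∈ Finset.univ.filter (fun i => M i ≠ none) := by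
            simp [hMj]
          have := hcon hj
          simp only [Finset.mem_filter, Finset.mem_univ, true_and] at this
          refine this ?_
          have hMT : M j ≠ T j := fun h => hne h.symm
          simp [vmeet, tmeet, hMT]
      have := hMmin _ hWS
      exact absurd this (not_le.mpr (Finset.card_lt_card hsub))
    -- M is not the all-root vector
    have hM0 : ∃ i, M i ≠ none := by
      by_contra h
      push_neg at h
      have : M = fun _ => none := funext h
      rw [this, h0] at hfM
      omega
    obtain ⟨i, hi⟩ := hM0
    obtain ⟨ℓ'', hℓ''⟩ := Option.ne_none_iff_exists'.mp hi
    -- the common leaf ℓ'' differs from L i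
    obtain ⟨T₂, hT₂, hT₂i⟩ := hstar i
    have hT₂' : f T₂ = -((N : ℤ) + 1) := by push_cast at hT₂; linarith
    have hT₂M : T₂ i = some ℓ'' := by rw [hagree T₂ hT₂' i hi, hℓ'']
    have hLi : ℓ'' ≠ L i := by
      intro h
      exact hT₂i (by rw [hT₂M, h])
    -- (A): anything with root at i is not a minimizer
    have hA : ∀ T, T i = none → -(N : ℤ) ≤ f T := by
      intro T hTi
      by_contra hlt
      push_neg at hlt
      have h1 := hb T
      have hTeq : f T = -((N : ℤ) + 1) := by omega
      have := hagree T hTeq i hi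
      rw [hTi, hℓ''] at this
      exact Option.some_ne_none ℓ'' this.symm
    -- (B): anything with leaf L i at coord i has value ≥ -N + 1
    have hB : ∀ T, T i = some (L i) → -(N : ℤ) + 1 ≤ f T := by
      intro T hTi
      by_contra hlt
      push_neg at hlt
      have h2 := hf M T
      have hmi : vmeet M T i = none := by
        simp only [vmeet, tmeet, hℓ'', hTi]
        rw [if_neg (by simpa using hLi)]
      have hji : vjoin M T i = none := by
        simp only [vjoin, tjoin, hℓ'', hTi]
        rw [if_neg hLi]
      have ha := hA _ hmi
      have hc := hA _ hji
      linarith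
    -- the reduced function g'
    set g : (Fin n → KTree k) → ℤ := fun T => f T - chiI i (L i) T with hgdef
    have hg_sub : KSubmodularZ g := by
      intro T U
      have h1 := hf T U
      have h2 := chi_super i (L i) T U
      simp only [hgdef]
      linarith
    have hg0 : g (fun _ => none) = 0 := by simp [hgdef, chiI, h0]
    have hg_bd : ∀ T, -(N : ℤ) ≤ g T := by
      intro T
      rcases hTi : T i with _ | a
      · have := hA T hTi
        simp only [hgdef, chiI, hTi, Option.elim]
        linarith
      · by_cases ha : a = L i
        · have := hB T (by rw [hTi, ha])
          simp only [hgdef, chiI, hTi, Option.elim, if_pos ha]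
          linarith
        · have := hb T
          simp only [hgdef, chiI, hTi, Option.elim, if_neg ha]
          linarith
    have hchiM : chiI i (L i) M = -1 := by
      simp [chiI, hℓ'', hLi]
    have hg_min : ∃ T, g T = -(N : ℤ) := by
      refine ⟨M, ?_⟩
      simp only [hgdef, hchiM, hfM]
      ring
    have hg_star : ∀ j, ∃ T, g T = -(N : ℤ) ∧ T j ≠ some (L j) := by
      intro j
      obtain ⟨T₃, hT₃, hT₃j⟩ := hstar j
      have hT₃' : f T₃ = -((N : ℤ) + 1) := by push_cast at hT₃; linarith
      have hT₃M : T₃ i = some ℓ'' := by rw [hagree T₃ hT₃' i hi, hℓ'']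
      refine ⟨T₃, ?_, hT₃j⟩
      have : chiI i (L i) T₃ = -1 := by simp [chiI, hT₃M, hLi]
      simp only [hgdef, this, hT₃']
      ring
    obtain ⟨x', hsum', hle'⟩ := IH g L hg_sub hg0 hg_bd hg_min hg_star
    refine ⟨fun j => x' j + if j = i then 1 else 0, ?_, ?_⟩
    · rw [Finset.sum_add_distrib, hsum']
      simp
    · intro T
      have hdec : obarZ (fun j => x' j + if j = i then 1 else 0) L T
          = obarZ x' L T + chiI i (L i) T := by
        unfold obarZ
        rw [← sub_eq_iff_eq_add', ← Finset.sum_sub_distrib]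
        rw [Finset.sum_eq_single i]
        · rcases hTi : T i with _ | a
          · simp [chiI, hTi]
          · by_cases ha : a = L i <;>
              simp [chiI, hTi, ha] <;> push_cast <;> ring
        · intro b _ hb'
          rcases hTb : T b with _ | a
          · simp
          · by_cases ha : a = L b <;> simp [hTb, ha, hb']
        · intro h
          exact absurd (Finset.mem_univ i) h
      rw [hdec]
      have h1 := hle' T
      simp only [hgdef] at h1
      linarith

/-- Integer Min-Max: for integer-valued `k`-submodular `f` with `f(𝟎) = 0`,
`min_{T ∈ 𝔗^n} f(T) = max_{(x,L) ∈ IU(f)} -‖x‖`. -/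
theorem stmt12 (k n : ℕ) (hk : 2 ≤ k) (hn : 1 ≤ n)
    (f : (Fin n → KTree k) → ℤ) (hf : KSubmodularZ f) (h0 : f (fun _ => none) = 0) :
    ∃ m : ℤ, IsLeast (Set.range f) m ∧
      (∃ x L, memIU f x L ∧ (m : ℝ) = -nrm x) ∧
      (∀ x L, memIU f x L → -nrm x ≤ (m : ℝ)) := by
  classical
  -- minimizer of f
  obtain ⟨T₀, hT₀⟩ := Finite.exists_min f
  have hleast : IsLeast (Set.range f) (f T₀) :=
    ⟨⟨T₀, rfl⟩, by rintro y ⟨T, rfl⟩; exact hT₀ T⟩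
  have hfT₀0 : f T₀ ≤ 0 := h0 ▸ hT₀ (fun _ => none)
  set N : ℕ := (-f T₀).toNat with hN
  have hNcast : (N : ℤ) = -f T₀ := Int.toNat_of_nonneg (by linarith)
  -- the leaf vector avoiding T₀
  have h0k : 0 < k := by omega
  have h1k : 1 < k := by omega
  set z : Fin k := ⟨0, h0k⟩ with hz
  set o1 : Fin k := ⟨1, h1k⟩ with ho1
  set L : Fin n → Fin k := fun j => if T₀ j = some z then o1 else z with hL
  have hLavoid : ∀ j, T₀ j ≠ some (L j) := by
    intro j
    simp only [hL]
    by_cases h : T₀ j = some z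
    · rw [if_pos h, h]
      intro hc
      have : z = o1 := by simpa using hc
      simp [hz, ho1, Fin.ext_iff] at this
    · rw [if_neg h]
      exact h
  obtain ⟨x, hsum, hle⟩ := key_lemma N f L hf h0
    (fun T => by rw [hNcast]; linarith [hT₀ T])
    ⟨T₀, by rw [hNcast]; ring⟩
    (fun j => ⟨T₀, by rw [hNcast]; ring_nf, hLavoid j⟩)
  refine ⟨f T₀, hleast, ⟨fun i => (x i : ℝ), L, ?_, ?_⟩, ?_⟩
  · refine ⟨fun i => by positivity, fun i => ⟨x i, by push_cast; ring⟩, fun T => ?_⟩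
    rw [obar_cast]
    exact_mod_cast hle T
  · have : nrm (fun i => ((x i : ℕ) : ℝ)) = ((N : ℤ) : ℝ) := by
      simp only [nrm, ← hsum]
      push_cast
      ring
    rw [this, hNcast]
    push_cast
    ring
  · rintro x' L' ⟨hx'0, _, hx'le⟩
    have h1 : -nrm x' ≤ obar x' L' T₀ := by
      unfold nrm obar
      rw [← Finset.sum_neg_distrib]
      refine Finset.sum_le_sum fun i _ => ?_
      rcases hTi : T₀ i with _ | a
      · simpa using hx'0 i
      · by_cases ha : a = L' i <;> simp [ha]
        linarith [hx'0 i]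
    calc -nrm x' ≤ obar x' L' T₀ := h1
      _ ≤ (f T₀ : ℝ) := hx'le T₀
end

section
/- Let k ≥ 1 and n ≥ 1, let f : 𝔗^n → ℝ be k-submodular with f(𝟎) = 0, and let x ∈ P(f). Then the set 𝔉(x) = {T ∈ 𝔗^n : x̄(T) = f(T)} is closed under ⊓ and ⊔, and for all T, U ∈ 𝔉(x) one has x̄(T ⊓ U) + x̄(T ⊔ U) = x̄(T) + x̄(U) (i.e. the restriction of x̄ = f to 𝔉(x) is k-modular). -/
/-- The function `x̄ : 𝔗^n → ℝ` associated with `x ∈ ℝ^{n×𝔏}`. -/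
def xbar {k n : ℕ} (x : Fin n → Fin k → ℝ) (T : Fin n → KTree k) : ℝ :=
  ∑ i, Option.elim (T i) 0 (x i)

/-- Membership in the `k`-submodular polyhedron `P(f)`. -/
def memP {k n : ℕ} (f : (Fin n → KTree k) → ℝ) (x : Fin n → Fin k → ℝ) : Prop :=
  (∀ T, xbar x T ≤ f T) ∧ ∀ (i : Fin n) (ℓ p : Fin k), ℓ ≠ p → x i ℓ + x i p ≤ 0

/-- for `x ∈ P(f)`, the set `𝔉(x)` of `x`-tight elements is closed under
`⊓` and `⊔`, and `x̄` restricted to `𝔉(x)` is `k`-modular. -/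
theorem stmt14 (k n : ℕ) (hk : 1 ≤ k) (hn : 1 ≤ n)
    (f : (Fin n → KTree k) → ℝ) (hf : KSubmodular f) (h0 : f (fun _ => none) = 0)
    (x : Fin n → Fin k → ℝ) (hx : memP f x) :
    ∀ T U, xbar x T = f T → xbar x U = f U →
      xbar x (vmeet T U) = f (vmeet T U) ∧ xbar x (vjoin T U) = f (vjoin T U) ∧
      xbar x (vmeet T U) + xbar x (vjoin T U) = xbar x T + xbar x U := by
  intro T U hT hU
  have key : xbar x T + xbar x U ≤ xbar x (vmeet T U) + xbar x (vjoin T U) := by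
    unfold xbar vmeet vjoin
    rw [← Finset.sum_add_distrib, ← Finset.sum_add_distrib]
    apply Finset.sum_le_sum
    intro i _
    rcases hTi : T i with _ | p <;> rcases hUi : U i with _ | q
    · simp [tmeet, tjoin]
    · simp [tmeet, tjoin]
    · simp [tmeet, tjoin]
    · by_cases hpq : p = q
      · simp [tmeet, tjoin, hpq]
      · have := hx.2 i p q hpq
        simp only [tmeet, tjoin, Option.some.injEq, if_neg hpq]
        simpa using this
  have h1 := hx.1 (vmeet T U)
  have h2 := hx.1 (vjoin T U)
  have h3 := hf T U
  constructor
  · linarith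
  constructor
  · linarith
  · linarith
end

section
/- (Exchange lemma for bases.) Let k ≥ 1 and n ≥ 1, let f : 𝔗^n → ℝ be k-submodular with f(𝟎) = 0, let x ∈ P(f), let 𝔅 be a basis for x, and let S, T ∈ 𝔅₁ = 𝔅 ∩ 𝔉(x). Then there exists γ in the set {T ⊓ S, T ⊔ S} ∪ {(i,{S_i,T_i}) : i ∈ {1,…,n} and S_i, T_i are distinct leaves} such that (𝔅 \ {T}) ∪ {γ} is a basis for x. -/
/-- A constraint indexing an equation: either a labeling `T ∈ 𝔗^n` (for the equation
`ȳ(T) = f(T)`), or a pair `(i, {p,q})` (for the equation `y_{ip} + y_{iq} = 0`). -/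
abbrev Constr (k n : ℕ) := (Fin n → KTree k) ⊕ (Fin n × Sym2 (Fin k))

/-- `y` solves the system of equations indexed by `B`. -/
def Solves {k n : ℕ} (f : (Fin n → KTree k) → ℝ) (B : Finset (Constr k n))
    (y : Fin n → Fin k → ℝ) : Prop :=
  (∀ T : Fin n → KTree k, Sum.inl T ∈ B → xbar y T = f T) ∧
  (∀ (i : Fin n) (p q : Fin k), Sum.inr (i, s(p, q)) ∈ B → y i p + y i q = 0)

/-- `B` is a basis for `x ∈ P(f)`: it consists of `kn` constraints from
`𝔉(x) ∪ 𝔊(x)` and `x` is the unique solution of the indexed system. -/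
def IsBasis {k n : ℕ} (f : (Fin n → KTree k) → ℝ) (x : Fin n → Fin k → ℝ)
    (B : Finset (Constr k n)) : Prop :=
  B.card = k * n ∧
  (∀ T : Fin n → KTree k, Sum.inl T ∈ B → xbar x T = f T) ∧
  (∀ (i : Fin n) (s : Sym2 (Fin k)), Sum.inr (i, s) ∈ B →
      ¬ s.IsDiag ∧ ∀ p q : Fin k, s = s(p, q) → x i p + x i q = 0) ∧
  (∀ y, Solves f B y → y = x)

namespace Stmt15aux
variable {k n : ℕ}

/-- Evaluation of a constraint as a function of `y`. -/
def ceval (c : Constr k n) (y : Fin n → Fin k → ℝ) : ℝ :=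
  Sum.elim (fun T => xbar y T)
    (fun is => Sym2.lift ⟨fun p q => y is.1 p + y is.1 q, fun p q => by ring⟩ is.2) c

lemma ceval_inl (T : Fin n → KTree k) (y : Fin n → Fin k → ℝ) :
    ceval (Sum.inl T) y = xbar y T := rfl

lemma ceval_inr (i : Fin n) (p q : Fin k) (y : Fin n → Fin k → ℝ) :
    ceval (Sum.inr (i, s(p, q))) y = y i p + y i q := rfl

/-- Right-hand side of a constraint. -/
def crhs (f : (Fin n → KTree k) → ℝ) (c : Constr k n) : ℝ := Sum.elim f (fun _ => 0) c

lemma xbar_add (y z : Fin n → Fin k → ℝ) (T : Fin n → KTree k) :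
    xbar (y + z) T = xbar y T + xbar z T := by
  unfold xbar
  rw [← Finset.sum_add_distrib]
  refine Finset.sum_congr rfl fun i _ => ?_
  cases T i <;> simp

lemma xbar_smul (t : ℝ) (y : Fin n → Fin k → ℝ) (T : Fin n → KTree k) :
    xbar (t • y) T = t * xbar y T := by
  unfold xbar
  rw [Finset.mul_sum]
  refine Finset.sum_congr rfl fun i _ => ?_
  cases T i <;> simp

lemma ceval_add (c : Constr k n) (y z : Fin n → Fin k → ℝ) :
    ceval c (y + z) = ceval c y + ceval c z := by
  rcases c with T | ⟨i, s⟩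
  · exact xbar_add y z T
  · induction s using Sym2.ind with
    | _ p q => simp [ceval_inr]; ring

lemma ceval_smul (c : Constr k n) (t : ℝ) (y : Fin n → Fin k → ℝ) :
    ceval c (t • y) = t * ceval c y := by
  rcases c with T | ⟨i, s⟩
  · exact xbar_smul t y T
  · induction s using Sym2.ind with
    | _ p q => simp [ceval_inr]; ring

lemma ceval_sub (c : Constr k n) (y z : Fin n → Fin k → ℝ) :
    ceval c (y - z) = ceval c y - ceval c z := by
  have h := ceval_add c (y - z) z
  simp at h; linarith

lemma solves_iff {f : (Fin n → KTree k) → ℝ} {B : Finset (Constr k n)}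
    {y : Fin n → Fin k → ℝ} :
    Solves f B y ↔ ∀ c ∈ B, ceval c y = crhs f c := by
  constructor
  · rintro ⟨h1, h2⟩ (T | ⟨i, s⟩) hc
    · exact h1 T hc
    · induction s using Sym2.ind with
      | _ p q => simpa [ceval_inr, crhs] using h2 i p q hc
  · intro h
    exact ⟨fun T hT => h _ hT, fun i p q hc => by simpa [ceval_inr, crhs] using h _ hc⟩

lemma tight_of_basis {f : (Fin n → KTree k) → ℝ} {x : Fin n → Fin k → ℝ}
    {B : Finset (Constr k n)} (hB : IsBasis f x B) :
    ∀ c ∈ B, ceval c x = crhs f c := by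
  rintro (T | ⟨i, s⟩) hc
  · exact hB.2.1 T hc
  · induction s using Sym2.ind with
    | _ p q => simpa [ceval_inr, crhs] using (hB.2.2.1 i _ hc).2 p q rfl

/-- The correction term at coordinate `i`. -/
def badterm (S T : Fin n → KTree k) (y : Fin n → Fin k → ℝ) (i : Fin n) : ℝ :=
  match S i, T i with
  | some p, some q => if p = q then 0 else y i p + y i q
  | _, _ => 0

lemma key_id (S T : Fin n → KTree k) (y : Fin n → Fin k → ℝ) :
    xbar y (vmeet T S) + xbar y (vjoin T S) + ∑ i, badterm S T y i
      = xbar y T + xbar y S := by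
  unfold xbar vmeet vjoin
  rw [← Finset.sum_add_distrib, ← Finset.sum_add_distrib, ← Finset.sum_add_distrib]
  refine Finset.sum_congr rfl fun i _ => ?_
  unfold badterm
  rcases hS : S i with _ | p <;> rcases hT : T i with _ | q <;>
    simp only [hS, hT, tmeet, tjoin]
  · simp
  · simp
  · simp
  · by_cases hpq : q = p
    · subst hpq; simp
    · have : ((some q : KTree k) ≠ some p) := by simpa using hpq
      have hpq' : ¬ (p = q) := fun h => hpq h.symm
      simp [this, hpq, hpq']
      ring

lemma tight {f : (Fin n → KTree k) → ℝ} {x : Fin n → Fin k → ℝ}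
    (hf : KSubmodular f) (hx : memP f x) {S T : Fin n → KTree k}
    (hfs : xbar x S = f S) (hft : xbar x T = f T) :
    xbar x (vmeet T S) = f (vmeet T S) ∧ xbar x (vjoin T S) = f (vjoin T S) ∧
      ∀ i, badterm S T x i = 0 := by
  have hkey := key_id S T x
  have hsub := hf T S
  have hm := hx.1 (vmeet T S)
  have hj := hx.1 (vjoin T S)
  have hbad : ∀ i ∈ Finset.univ, badterm S T x i ≤ 0 := by
    intro i _
    unfold badterm
    rcases hSi : S i with _ | p <;> rcases hTi : T i with _ | q <;> simp only [hSi, hTi]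
    · exact le_refl 0
    · exact le_refl 0
    · exact le_refl 0
    · by_cases hpq : p = q
      · simp [hpq]
      · simpa [hpq] using hx.2 i p q hpq
  have hsum : ∑ i, badterm S T x i ≤ 0 := Finset.sum_nonpos hbad
  have hsum0 : ∑ i, badterm S T x i = 0 := by linarith
  refine ⟨by linarith, by linarith, ?_⟩
  have := (Finset.sum_eq_zero_iff_of_nonpos hbad).mp hsum0
  exact fun i => this i (Finset.mem_univ i)

/-- The linear map collecting the constraint evaluations over a finite set. -/
noncomputable def Phi (D : Finset (Constr k n)) :
    (Fin n → Fin k → ℝ) →ₗ[ℝ] ({c // c ∈ D} → ℝ) where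
  toFun y := fun c => ceval c.1 y
  map_add' y z := funext fun c => ceval_add c.1 y z
  map_smul' t y := funext fun c => ceval_smul c.1 t y

lemma mk_basis {f : (Fin n → KTree k) → ℝ} {x : Fin n → Fin k → ℝ}
    {B : Finset (Constr k n)} (hB : IsBasis f x B) (hkn : 1 ≤ k * n)
    {T : Fin n → KTree k} (hT : Sum.inl T ∈ B)
    (v : Fin n → Fin k → ℝ) (hv : ∀ c ∈ B.erase (Sum.inl T), ceval c v = 0)
    {γ : Constr k n} (hγv : ceval γ v ≠ 0)
    (hγx : ceval γ x = crhs f γ)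
    (hγg : ∀ i s, γ = Sum.inr (i, s) → ¬ s.IsDiag ∧
        ∀ p q : Fin k, s = s(p, q) → x i p + x i q = 0) :
    IsBasis f x (insert γ (B.erase (Sum.inl T))) := by
  have hxB := tight_of_basis hB
  have hhom : ∀ w : Fin n → Fin k → ℝ, (∀ c ∈ B, ceval c w = 0) → w = 0 := by
    intro w hw
    have : Solves f B (x + w) := by
      rw [solves_iff]
      intro c hc
      rw [ceval_add, hxB c hc, hw c hc, add_zero]
    have hxw := hB.2.2.2 _ this
    have : x + w = x + 0 := by simpa using hxw
    exact add_left_cancel this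
  have hTv : ceval (Sum.inl T) v ≠ 0 := by
    intro h0
    have hv0 : v = 0 := by
      apply hhom
      intro c hc
      by_cases hcT : c = Sum.inl T
      · rw [hcT]; exact h0
      · exact hv c (Finset.mem_erase.mpr ⟨hcT, hc⟩)
    rw [hv0] at hγv
    exact hγv (by rw [show (0 : Fin n → Fin k → ℝ) = (0:ℝ) • 0 by simp, ceval_smul]; simp)
  have hγnot : γ ∉ B.erase (Sum.inl T) := fun h => hγv (hv γ h)
  refine ⟨?_, ?_, ?_, ?_⟩
  · rw [Finset.card_insert_of_notMem hγnot, Finset.card_erase_of_mem hT, hB.1]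
    omega
  · intro U hU
    rcases Finset.mem_insert.mp hU with hU | hU
    · rw [← hU] at hγx; exact hγx
    · exact hB.2.1 U (Finset.mem_of_mem_erase hU)
  · intro i s hs
    rcases Finset.mem_insert.mp hs with hs | hs
    · exact hγg i s hs.symm
    · exact hB.2.2.1 i s (Finset.mem_of_mem_erase hs)
  · intro y hy
    have hy' : ∀ c ∈ insert γ (B.erase (Sum.inl T)), ceval c y = crhs f c :=
      solves_iff.mp hy
    set w := y - x with hw
    have hwE : ∀ c ∈ B.erase (Sum.inl T), ceval c w = 0 := by
      intro c hc
      rw [ceval_sub, hy' c (Finset.mem_insert_of_mem hc),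
        hxB c (Finset.mem_of_mem_erase hc), sub_self]
    have hwγ : ceval γ w = 0 := by
      rw [ceval_sub, hy' γ (Finset.mem_insert_self _ _), hγx, sub_self]
    set a := ceval (Sum.inl T) v with ha
    set b := ceval (Sum.inl T) w with hb
    have hu : a • w - b • v = 0 := by
      apply hhom
      intro c hc
      by_cases hcT : c = Sum.inl T
      · rw [hcT, ceval_sub, ceval_smul, ceval_smul, ← ha, ← hb]; ring
      · have hc' := Finset.mem_erase.mpr ⟨hcT, hc⟩
        rw [ceval_sub, ceval_smul, ceval_smul, hwE c hc', hv c hc']; ring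
    have haw : a • w = b • v := sub_eq_zero.mp hu
    have : a * ceval γ w = b * ceval γ v := by
      rw [← ceval_smul, ← ceval_smul, haw]
    rw [hwγ, mul_zero] at this
    have hb0 : b = 0 := by
      rcases mul_eq_zero.mp this.symm with h | h
      · exact h
      · exact absurd h hγv
    rw [hb0, zero_smul] at haw
    have hw0 : w = 0 := by
      rcases smul_eq_zero.mp haw with h | h
      · exact absurd h hTv
      · exact h
    have : y - x = 0 := hw0
    exact sub_eq_zero.mp this

lemma hom_of_basis {f : (Fin n → KTree k) → ℝ} {x : Fin n → Fin k → ℝ}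
    {B : Finset (Constr k n)} (hB : IsBasis f x B) :
    ∀ w : Fin n → Fin k → ℝ, (∀ c ∈ B, ceval c w = 0) → w = 0 := by
  intro w hw
  have : Solves f B (x + w) := by
    rw [solves_iff]
    intro c hc
    rw [ceval_add, tight_of_basis hB c hc, hw c hc, add_zero]
  have hxw := hB.2.2.2 _ this
  have : x + w = x + 0 := by simpa using hxw
  exact add_left_cancel this

lemma badterm_cases {S T : Fin n → KTree k} {y : Fin n → Fin k → ℝ} {i : Fin n}
    (h : badterm S T y i ≠ 0) :
    ∃ p q, S i = some p ∧ T i = some q ∧ p ≠ q ∧ y i p + y i q ≠ 0 := by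
  unfold badterm at h
  rcases hSi : S i with _ | p <;> rcases hTi : T i with _ | q <;> rw [hSi, hTi] at h
  · exact (h rfl).elim
  · exact (h rfl).elim
  · exact (h rfl).elim
  · have h' : (if p = q then (0:ℝ) else y i p + y i q) ≠ 0 := h
    by_cases hpq : p = q
    · rw [if_pos hpq] at h'; exact (h' rfl).elim
    · rw [if_neg hpq] at h'
      exact ⟨p, q, rfl, rfl, hpq, h'⟩

lemma badterm_some {S T : Fin n → KTree k} {y : Fin n → Fin k → ℝ} {i : Fin n}
    {p q : Fin k} (hSi : S i = some p) (hTi : T i = some q) (hpq : p ≠ q)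
    (h : badterm S T y i = 0) : y i p + y i q = 0 := by
  unfold badterm at h
  rw [hSi, hTi] at h
  have h' : (if p = q then (0:ℝ) else y i p + y i q) = 0 := h
  rwa [if_neg hpq] at h'

end Stmt15aux

open Stmt15aux

/-- Exchange lemma for bases: for every `x ∈ P(f)`, every basis `𝔅`
for `x` and all `S, T ∈ 𝔅₁ = 𝔅 ∩ 𝔉(x)`, there is
`γ ∈ {T ⊓ S, T ⊔ S} ∪ {(i, {S_i, T_i}) : S_i, T_i distinct leaves}` such that
`(𝔅 \ {T}) ∪ {γ}` is a basis for `x`. -/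
theorem stmt15 (k n : ℕ) (hk : 1 ≤ k) (hn : 1 ≤ n)
    (f : (Fin n → KTree k) → ℝ) (hf : KSubmodular f) (h0 : f (fun _ => none) = 0)
    (x : Fin n → Fin k → ℝ) (hx : memP f x)
    (B : Finset (Constr k n)) (hB : IsBasis f x B)
    (S T : Fin n → KTree k) (hS : Sum.inl S ∈ B) (hT : Sum.inl T ∈ B) :
    ∃ γ : Constr k n,
      (γ = Sum.inl (vmeet T S) ∨ γ = Sum.inl (vjoin T S) ∨
        ∃ (i : Fin n) (p q : Fin k), S i = some p ∧ T i = some q ∧ p ≠ q ∧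
          γ = Sum.inr (i, s(p, q))) ∧
      IsBasis f x (insert γ (B.erase (Sum.inl T))) := by
  classical
  have hfs : xbar x S = f S := hB.2.1 S hS
  have hft : xbar x T = f T := hB.2.1 T hT
  have hkn : 1 ≤ k * n := Nat.one_le_iff_ne_zero.mpr (Nat.mul_ne_zero (by omega) (by omega))
  by_cases hST : S = T
  · refine ⟨Sum.inl (vmeet T S), Or.inl rfl, ?_⟩
    have hmeet : vmeet T S = T := by
      subst hST
      funext i; simp [vmeet, tmeet]
    rw [hmeet, Finset.insert_erase hT]
    exact hB
  · have hSe : Sum.inl S ∈ B.erase (Sum.inl T) :=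
      Finset.mem_erase.mpr ⟨by simpa using hST, hS⟩
    set D := B.erase (Sum.inl T) with hD
    -- find a nonzero vector in the kernel of the reduced system
    have hcard : D.card = k * n - 1 := by rw [hD, Finset.card_erase_of_mem hT, hB.1]
    have hrank := LinearMap.finrank_range_add_finrank_ker (Phi (k := k) (n := n) D)
    have hdom : Module.finrank ℝ (Fin n → Fin k → ℝ) = k * n := by
      simp [Module.finrank_pi_fintype, Module.finrank_pi, Finset.sum_const, mul_comm]
    have hrange : Module.finrank ℝ (LinearMap.range (Phi (k := k) (n := n) D)) ≤ D.card := by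
      refine le_trans (Submodule.finrank_le _) ?_
      simp [Module.finrank_pi, Fintype.card_coe]
    have hkerpos : 0 < Module.finrank ℝ (LinearMap.ker (Phi (k := k) (n := n) D)) := by
      rw [hdom] at hrank
      omega
    have hne : LinearMap.ker (Phi (k := k) (n := n) D) ≠ ⊥ := by
      intro h
      rw [h, finrank_bot] at hkerpos
      exact absurd hkerpos (by omega)
    obtain ⟨v, hvker, hv0⟩ := Submodule.exists_mem_ne_zero_of_ne_bot hne
    have hv : ∀ c ∈ D, ceval c v = 0 := by
      intro c hc
      exact congrFun (LinearMap.mem_ker.mp hvker) ⟨c, hc⟩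
    have hTv : ceval (Sum.inl T) v ≠ 0 := by
      intro h0'
      apply hv0
      apply hom_of_basis hB
      intro c hc
      by_cases hcT : c = Sum.inl T
      · rw [hcT]; exact h0'
      · exact hv c (Finset.mem_erase.mpr ⟨hcT, hc⟩)
    obtain ⟨hm, hj, hbad0⟩ := tight hf hx hfs hft
    have hkv := key_id S T v
    have hSv : xbar v S = 0 := hv _ hSe
    rw [hSv, add_zero] at hkv
    by_cases h1 : xbar v (vmeet T S) ≠ 0
    · exact ⟨Sum.inl (vmeet T S), Or.inl rfl,
        mk_basis hB hkn hT v hv h1 hm (by intro i s h; simp at h)⟩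
    by_cases h2 : xbar v (vjoin T S) ≠ 0
    · exact ⟨Sum.inl (vjoin T S), Or.inr (Or.inl rfl),
        mk_basis hB hkn hT v hv h2 hj (by intro i s h; simp at h)⟩
    push_neg at h1 h2
    have hsumne : ∑ i, badterm S T v i ≠ 0 := by
      rw [h1, h2, zero_add, zero_add] at hkv
      rw [hkv]
      exact hTv
    obtain ⟨i, _, hbi⟩ := Finset.exists_ne_zero_of_sum_ne_zero hsumne
    obtain ⟨p, q, hSi, hTi, hpq, hviq⟩ := badterm_cases hbi
    have hpair : x i p + x i q = 0 := badterm_some hSi hTi hpq (hbad0 i)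
    refine ⟨Sum.inr (i, s(p, q)), Or.inr (Or.inr ⟨i, p, q, hSi, hTi, hpq, rfl⟩),
      mk_basis hB hkn hT v hv ?_ ?_ ?_⟩
    · rw [ceval_inr]; exact hviq
    · rw [ceval_inr]; simpa [crhs] using hpair
    · intro i' s h
      rw [Sum.inr.injEq, Prod.mk.injEq] at h
      obtain ⟨rfl, rfl⟩ := h
      constructor
      · simpa using hpq
      · intro p' q' hs
        rcases Sym2.eq_iff.mp hs with ⟨rfl, rfl⟩ | ⟨rfl, rfl⟩
        · exact hpair
        · linarith
end

section
/- (Fujishige–Tanigawa Min-Max.) Let k ≥ 2 and n ≥ 1, and let f : 𝔗^n → ℝ be k-submodular with f(𝟎) = 0. Then min_{T ∈ 𝔗^n} f(T) = max_{x ∈ P_FT(f)} −‖x‖_{1,∞}; that is, there exists x ∈ P_FT(f) with min_{T ∈ 𝔗^n} f(T) = −‖x‖_{1,∞}, and −‖x'‖_{1,∞} ≤ min_{T ∈ 𝔗^n} f(T) for every x' ∈ P_FT(f). -/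
/-- Membership in the Fujishige–Tanigawa polyhedron `P_FT(f)`. -/
def memPFT {k n : ℕ} (f : (Fin n → KTree k) → ℝ) (x : Fin n → Fin k → ℝ) : Prop :=
  ∀ T, xbar x T ≤ f T

/-- The norm `‖x‖_{1,∞} = ∑_i max_{ℓ ∈ 𝔏} |x_{iℓ}|`. -/
noncomputable def nrmFT {k n : ℕ} (x : Fin n → Fin k → ℝ) : ℝ :=
  ∑ i, ⨆ ℓ : Fin k, |x i ℓ|

open Finset

namespace FT

variable {k n : ℕ}

noncomputable def mn [NeZero k] (x : Fin n → Fin k → ℝ) (i : Fin n) : ℝ :=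
  Finset.univ.inf' Finset.univ_nonempty (x i)

noncomputable def Phi [NeZero k] (x : Fin n → Fin k → ℝ) : ℝ := ∑ i, mn x i

lemma mn_le [NeZero k] (x : Fin n → Fin k → ℝ) (i : Fin n) (ℓ : Fin k) : mn x i ≤ x i ℓ :=
  Finset.inf'_le _ (mem_univ ℓ)

lemma exists_mn [NeZero k] (x : Fin n → Fin k → ℝ) (i : Fin n) : ∃ ℓ, x i ℓ = mn x i := by
  obtain ⟨ℓ, _, h⟩ := Finset.exists_mem_eq_inf' (Finset.univ_nonempty) (x i)
  exact ⟨ℓ, h.symm⟩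

lemma two_distinct (hk : 2 ≤ k) : ∃ a b : Fin k, a ≠ b :=
  ⟨⟨0, by omega⟩, ⟨1, by omega⟩, by simp [Fin.ext_iff]⟩

lemma mn_nonpos (hk : 2 ≤ k) [NeZero k] (x : Fin n → Fin k → ℝ)
    (hx2 : ∀ (i : Fin n) (ℓ p : Fin k), ℓ ≠ p → x i ℓ + x i p ≤ 0) (i : Fin n) :
    mn x i ≤ 0 := by
  obtain ⟨a, b, hab⟩ := two_distinct hk
  have h1 := mn_le x i a
  have h2 := mn_le x i b
  have h3 := hx2 i a b hab
  linarith

lemma row_zero (hk : 2 ≤ k) [NeZero k] (x : Fin n → Fin k → ℝ)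
    (hx2 : ∀ (i : Fin n) (ℓ p : Fin k), ℓ ≠ p → x i ℓ + x i p ≤ 0) (i : Fin n)
    (h : mn x i = 0) (ℓ : Fin k) : x i ℓ = 0 := by
  obtain ⟨a, b, hab⟩ := two_distinct hk
  have hp : ∃ p, p ≠ ℓ := by
    by_cases hla : ℓ = a
    · exact ⟨b, by rw [hla]; exact hab.symm⟩
    · exact ⟨a, fun hc => hla hc.symm⟩
  obtain ⟨p, hpl⟩ := hp
  have h1 := mn_le x i ℓ
  have h2 := mn_le x i p
  have h3 := hx2 i ℓ p (fun hc => hpl hc.symm)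
  rw [h] at h1 h2
  linarith

lemma sup_abs (hk : 2 ≤ k) [NeZero k] (x : Fin n → Fin k → ℝ)
    (hx2 : ∀ (i : Fin n) (ℓ p : Fin k), ℓ ≠ p → x i ℓ + x i p ≤ 0) (i : Fin n) :
    (⨆ ℓ : Fin k, |x i ℓ|) = -mn x i := by
  have hmn0 : mn x i ≤ 0 := mn_nonpos hk x hx2 i
  obtain ⟨l0, hℓ⟩ := exists_mn x i
  refine le_antisymm (ciSup_le fun ℓ => abs_le.mpr ⟨by linarith [mn_le x i ℓ], ?_⟩) ?_
  · by_cases h : ℓ = l0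
    · subst h; rw [hℓ]; linarith
    · have := hx2 i ℓ l0 h
      rw [hℓ] at this; linarith
  · have h1 : |x i l0| = -mn x i := by rw [hℓ, abs_of_nonpos hmn0]
    rw [← h1]
    exact le_ciSup (f := fun ℓ => |x i ℓ|) (Set.Finite.bddAbove (Set.finite_range _)) l0

lemma percoord (g : Fin k → ℝ) (hp : ∀ ℓ p, ℓ ≠ p → g ℓ + g p ≤ 0) (a b : KTree k) :
    Option.elim a 0 g + Option.elim b 0 g ≤
      Option.elim (tmeet a b) 0 g + Option.elim (tjoin a b) 0 g := by
  rcases a with _ | p <;> rcases b with _ | q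
  · simp [tmeet, tjoin]
  · simp [tmeet, tjoin]
  · simp [tmeet, tjoin]
  · by_cases h : p = q
    · subst h; simp [tmeet, tjoin]
    · have hne : (some p : KTree k) ≠ some q := by simpa using h
      have := hp p q h
      simp only [tmeet, tjoin, if_neg hne, if_neg h, Option.elim]
      linarith

lemma tjoin_eq_some {a b : KTree k} {p : Fin k} (h : tjoin a b = some p) :
    a = some p ∨ b = some p := by
  rcases a with _ | q <;> rcases b with _ | r
  · simp [tjoin] at h
  · right; simpa [tjoin] using h
  · left; simpa [tjoin] using h
  · simp only [tjoin] at h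
    by_cases hqr : q = r
    · rw [if_pos hqr] at h; left; exact h
    · rw [if_neg hqr] at h; exact absurd h (by simp)

lemma xbar_add_smul (x d : Fin n → Fin k → ℝ) (ε : ℝ) (T : Fin n → KTree k) :
    xbar (fun i ℓ => x i ℓ + ε * d i ℓ) T = xbar x T + ε * xbar d T := by
  unfold xbar
  rw [mul_sum, ← sum_add_distrib]
  refine Finset.sum_congr rfl fun i _ => ?_
  cases hT : T i <;> simp [hT]


lemma tight_exchange (f : (Fin n → KTree k) → ℝ) (hf : KSubmodular f)
    (x : Fin n → Fin k → ℝ) (hx : memP f x) {T U : Fin n → KTree k}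
    (hT : xbar x T = f T) (hU : xbar x U = f U) :
    xbar x (vjoin T U) = f (vjoin T U) ∧
    ∀ j p q, T j = some p → U j = some q → p ≠ q → x j p + x j q = 0 := by
  have hpc : ∀ j : Fin n, Option.elim (T j) 0 (x j) + Option.elim (U j) 0 (x j) ≤
      Option.elim (tmeet (T j) (U j)) 0 (x j) + Option.elim (tjoin (T j) (U j)) 0 (x j) :=
    fun j => percoord (x j) (fun ℓ p h => hx.2 j ℓ p h) (T j) (U j)
  have hsum : xbar x T + xbar x U ≤ xbar x (vmeet T U) + xbar x (vjoin T U) := by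
    unfold xbar vmeet vjoin
    rw [← sum_add_distrib, ← sum_add_distrib]
    exact Finset.sum_le_sum fun j _ => hpc j
  have h1 := hx.1 (vmeet T U)
  have h2 := hx.1 (vjoin T U)
  have h3 := hf T U
  have hjoin : xbar x (vjoin T U) = f (vjoin T U) := by linarith
  refine ⟨hjoin, ?_⟩
  have heq : (∑ j, (Option.elim (T j) 0 (x j) + Option.elim (U j) 0 (x j))) =
      ∑ j, (Option.elim (tmeet (T j) (U j)) 0 (x j) +
        Option.elim (tjoin (T j) (U j)) 0 (x j)) := by
    have e1 : (∑ j, (Option.elim (T j) 0 (x j) + Option.elim (U j) 0 (x j))) =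
        xbar x T + xbar x U := by unfold xbar; rw [← sum_add_distrib]
    have e2 : (∑ j, (Option.elim (tmeet (T j) (U j)) 0 (x j) +
        Option.elim (tjoin (T j) (U j)) 0 (x j))) =
        xbar x (vmeet T U) + xbar x (vjoin T U) := by
      unfold xbar vmeet vjoin; rw [← sum_add_distrib]
    rw [e1, e2]; linarith
  have hpt := (Finset.sum_eq_sum_iff_of_le (fun j (_ : j ∈ univ) => hpc j)).mp heq
  intro j p q hTj hUj hpq
  have := hpt j (mem_univ j)
  rw [hTj, hUj] at this
  have hne : (some p : KTree k) ≠ some q := by simpa using hpq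
  simp only [tmeet, tjoin, if_neg hne, if_neg hpq, Option.elim] at this
  linarith

lemma Phi_le_xbar (hk : 2 ≤ k) [NeZero k] (x : Fin n → Fin k → ℝ)
    (hx2 : ∀ (i : Fin n) (ℓ p : Fin k), ℓ ≠ p → x i ℓ + x i p ≤ 0)
    (T : Fin n → KTree k) : Phi x ≤ xbar x T := by
  refine Finset.sum_le_sum fun i _ => ?_
  cases hTi : T i
  · simpa [hTi] using mn_nonpos hk x hx2 i
  · simpa [hTi] using mn_le x i _

lemma exists_memP (hk : 2 ≤ k) (f : (Fin n → KTree k) → ℝ)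
    (h0 : f (fun _ => none) = 0) : ∃ x, memP f x := by
  classical
  have hne : (univ : Finset (Fin n → KTree k)).Nonempty := univ_nonempty
  set c : ℝ := min (univ.inf' hne f) 0 with hc
  have hc0 : c ≤ 0 := min_le_right _ _
  have hcf : ∀ T, c ≤ f T := fun T => le_trans (min_le_left _ _) (inf'_le f (mem_univ T))
  refine ⟨fun _ _ => c, ⟨?_, fun i ℓ p _ => by linarith⟩⟩
  intro T
  by_cases hT : ∀ i, T i = none
  · have hTe : T = fun _ => none := funext hT
    rw [hTe, h0]
    unfold xbar
    simp
  · push_neg at hT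
    obtain ⟨i0, hi0⟩ := hT
    have hle : xbar (fun _ _ => c) T ≤ c := by
      unfold xbar
      rw [← Finset.add_sum_erase _ _ (mem_univ i0)]
      have ht0 : Option.elim (T i0) 0 (fun _ : Fin k => c) = c := by
        cases hTi : T i0
        · exact absurd hTi hi0
        · simp
      rw [ht0]
      have : (∑ j ∈ univ.erase i0, Option.elim (T j) 0 (fun _ : Fin k => c)) ≤ 0 := by
        refine Finset.sum_nonpos fun j _ => ?_
        cases hTj : T j <;> simp [hc0]
      linarith
    exact le_trans hle (hcf T)


def sing (i : Fin n) (ℓ : Fin k) : Fin n → KTree k := fun j => if j = i then some ℓ else none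

lemma xbar_sing (x : Fin n → Fin k → ℝ) (i : Fin n) (ℓ : Fin k) :
    xbar x (sing i ℓ) = x i ℓ := by
  unfold xbar sing
  rw [Finset.sum_eq_single_of_mem i (mem_univ i) (fun j _ hj => by simp [hj])]
  simp

lemma continuous_xbar (T : Fin n → KTree k) :
    Continuous (fun x : Fin n → Fin k → ℝ => xbar x T) := by
  unfold xbar
  refine continuous_finset_sum _ fun i _ => ?_
  cases hTi : T i
  · simpa [hTi] using continuous_const
  · simp only [hTi, Option.elim]
    exact (continuous_apply _).comp (continuous_apply i)

lemma continuous_Phi [NeZero k] : Continuous (Phi (k := k) (n := n)) := by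
  unfold Phi mn
  refine continuous_finset_sum _ fun i _ => ?_
  exact Continuous.finset_inf'_apply _ fun ℓ _ => (continuous_apply ℓ).comp (continuous_apply i)

lemma exists_max (hk : 2 ≤ k) [NeZero k] (f : (Fin n → KTree k) → ℝ)
    (hex : ∃ x, memP f x) :
    ∃ x, memP f x ∧ ∀ y, memP f y → Phi y ≤ Phi x := by
  classical
  obtain ⟨x0, hx0⟩ := hex
  set c : ℝ := Phi x0 with hc
  set K : Set (Fin n → Fin k → ℝ) := {x | memP f x ∧ c ≤ Phi x} with hK
  have hne : (univ : Finset (Fin n → KTree k)).Nonempty := univ_nonempty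
  set A : ℝ := univ.sup' hne f with hA
  set R : ℝ := |A| + |c| with hR
  have hR0 : 0 ≤ R := by positivity
  -- bounds
  have hbound : ∀ x ∈ K, ∀ (i : Fin n) (ℓ : Fin k), |x i ℓ| ≤ R := by
    rintro x ⟨hxP, hxc⟩ i ℓ
    have hub : x i ℓ ≤ A := by
      have := hxP.1 (sing i ℓ)
      rw [xbar_sing] at this
      exact le_trans this (le_sup' f (mem_univ _))
    have hlb : c ≤ x i ℓ := by
      have h1 : Phi x ≤ mn x i := by
        unfold Phi
        rw [← Finset.add_sum_erase _ _ (mem_univ i)]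
        have : (∑ j ∈ univ.erase i, mn x j) ≤ 0 :=
          Finset.sum_nonpos fun j _ => mn_nonpos hk x hxP.2 j
        linarith
      exact le_trans (le_trans hxc h1) (mn_le x i ℓ)
    rw [abs_le]
    constructor
    · calc -R ≤ -|c| := by rw [hR]; linarith [abs_nonneg A]
        _ ≤ c := neg_abs_le c
        _ ≤ x i ℓ := hlb
    · calc x i ℓ ≤ A := hub
        _ ≤ |A| := le_abs_self A
        _ ≤ R := by rw [hR]; linarith [abs_nonneg c]
  have hKsub : K ⊆ Metric.closedBall 0 R := by
    intro x hx
    rw [Metric.mem_closedBall, dist_zero_right]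
    rw [pi_norm_le_iff_of_nonneg hR0]
    intro i
    rw [pi_norm_le_iff_of_nonneg hR0]
    intro ℓ
    rw [Real.norm_eq_abs]
    exact hbound x hx i ℓ
  have hKcl : IsClosed K := by
    have hKeq : K = (⋂ T, {x : Fin n → Fin k → ℝ | xbar x T ≤ f T}) ∩
        ((⋂ i, ⋂ ℓ, ⋂ p, {x : Fin n → Fin k → ℝ | ℓ ≠ p → x i ℓ + x i p ≤ 0}) ∩
          {x | c ≤ Phi x}) := by
      ext x
      simp only [hK, Set.mem_setOf_eq, Set.mem_inter_iff, Set.mem_iInter, memP]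
      tauto
    rw [hKeq]
    refine (isClosed_iInter fun T => isClosed_le (continuous_xbar T) continuous_const).inter
      ((isClosed_iInter fun i => isClosed_iInter fun ℓ => isClosed_iInter fun p => ?_).inter
        (isClosed_le continuous_const continuous_Phi))
    by_cases h : ℓ = p
    · simp only [h]
      have : {x : Fin n → Fin k → ℝ | p ≠ p → x i p + x i p ≤ 0} = Set.univ := by
        ext x; simp
      rw [this]; exact isClosed_univ
    · have : {x : Fin n → Fin k → ℝ | ℓ ≠ p → x i ℓ + x i p ≤ 0} =
          {x : Fin n → Fin k → ℝ | x i ℓ + x i p ≤ 0} := by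
        ext x; simp [h]
      rw [this]
      exact isClosed_le (by fun_prop) continuous_const
  have hKcp : IsCompact K :=
    IsCompact.of_isClosed_subset (isCompact_closedBall 0 R) hKcl hKsub
  obtain ⟨x, hxK, hmax⟩ := hKcp.exists_isMaxOn ⟨x0, hx0, le_refl c⟩
    continuous_Phi.continuousOn
  refine ⟨x, hxK.1, fun y hy => ?_⟩
  by_cases h : c ≤ Phi y
  · exact hmax ⟨hy, h⟩
  · push_neg at h
    have := hxK.2
    linarith


lemma le_mn [NeZero k] (x : Fin n → Fin k → ℝ) (j : Fin n) (c : ℝ)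
    (h : ∀ ℓ, c ≤ x j ℓ) : c ≤ mn x j :=
  Finset.le_inf' _ _ fun ℓ _ => h ℓ

lemma core (hk : 2 ≤ k) [NeZero k] (f : (Fin n → KTree k) → ℝ) (hf : KSubmodular f)
    (x : Fin n → Fin k → ℝ) (hx : memP f x)
    (hmax : ∀ y, memP f y → Phi y ≤ Phi x) (j0 : Fin n) (hj0 : mn x j0 < 0) :
    ∃ V, xbar x V = f V ∧ (∃ p, V j0 = some p ∧ x j0 p = mn x j0) ∧
      (∀ j p, mn x j < 0 → V j = some p → x j p = mn x j) := by
  classical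
  by_contra hcon
  push_neg at hcon
  set d : Fin n → Fin k → ℝ := fun j ℓ =>
    if mn x j < 0 then (if x j ℓ = mn x j then (if j = j0 then 1 else 0) else -2) else 0 with hd
  have hd_j0_min : ∀ ℓ, x j0 ℓ = mn x j0 → d j0 ℓ = 1 := by
    intro ℓ h; simp [hd, hj0, h]
  have hd_nonmin : ∀ j ℓ, mn x j < 0 → x j ℓ ≠ mn x j → d j ℓ = -2 := by
    intro j ℓ h1 h2; simp [hd, h1, h2]
  have hd_other : ∀ j ℓ, j ≠ j0 → d j ℓ ≤ 0 := by
    intro j ℓ hj; simp only [hd]; split_ifs with h1 h2 h3 <;> first | norm_num | exact absurd h3 hj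
  have hd_le_one : ∀ j ℓ, d j ℓ ≤ 1 := by
    intro j ℓ; simp only [hd]; split_ifs <;> norm_num
  have hd_zero : ∀ j ℓ, ¬ mn x j < 0 → d j ℓ = 0 := fun j ℓ h => by simp [hd, h]
  -- coefficient of every tight constraint is nonpositive
  have hcoef : ∀ V, xbar x V = f V → xbar d V ≤ 0 := by
    intro V hV
    by_cases hgood : ∃ p, V j0 = some p ∧ x j0 p = mn x j0
    · obtain ⟨j1, p1, hmn1, hVj1, hxj1⟩ := hcon V hV hgood
      have hj1j0 : j1 ≠ j0 := by
        rintro rfl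
        obtain ⟨p, hVp, hxp⟩ := hgood
        rw [hVj1, Option.some.injEq] at hVp
        exact hxj1 (hVp ▸ hxp)
      unfold xbar
      rw [← Finset.add_sum_erase _ _ (mem_univ j1)]
      have ht1 : Option.elim (V j1) 0 (d j1) = -2 := by
        rw [hVj1]; exact hd_nonmin j1 p1 hmn1 hxj1
      have hj0mem : j0 ∈ univ.erase j1 := mem_erase.mpr ⟨hj1j0.symm, mem_univ _⟩
      rw [← Finset.add_sum_erase _ _ hj0mem]
      have ht2 : Option.elim (V j0) 0 (d j0) ≤ 1 := by
        cases hV0 : V j0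
        · norm_num
        · simpa using hd_le_one j0 _
      have ht3 : (∑ j ∈ (univ.erase j1).erase j0, Option.elim (V j) 0 (d j)) ≤ 0 := by
        refine Finset.sum_nonpos fun j hj => ?_
        have hjne : j ≠ j0 := (mem_erase.mp hj).1
        cases hVj : V j
        · simp
        · simpa using hd_other j _ hjne
      rw [ht1]
      linarith
    · push_neg at hgood
      refine Finset.sum_nonpos fun j _ => ?_
      by_cases hjj : j = j0
      · subst hjj
        cases hV0 : V j
        · simp
        · rename_i p
          have hxp : x j p ≠ mn x j := hgood p hV0
          simp only [Option.elim]
          rw [hd_nonmin j p hj0 hxp]; norm_num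
      · cases hVj : V j
        · simp
        · simpa using hd_other j _ hjj
  -- choose the step size ε
  have hneT : (univ : Finset (Fin n → KTree k)).Nonempty := univ_nonempty
  haveI : Nonempty (Fin n) := ⟨j0⟩
  have hnepair : (univ : Finset (Fin n × Fin k)).Nonempty := univ_nonempty
  set εa : ℝ := univ.inf' hneT (fun T => if 0 < xbar d T ∧ xbar x T < f T
      then (f T - xbar x T) / (xbar d T) else 1) with hεa
  set εc : ℝ := univ.inf' hnepair (fun jl => if mn x jl.1 < 0 ∧ x jl.1 jl.2 ≠ mn x jl.1
      then (x jl.1 jl.2 - mn x jl.1) / 3 else 1) with hεc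
  set ε : ℝ := min εa (min εc (-mn x j0)) with hε
  have hεa_pos : 0 < εa := by
    rw [hεa, Finset.lt_inf'_iff]
    intro T _
    split_ifs with h
    · exact div_pos (by linarith [h.2]) h.1
    · norm_num
  have hεc_pos : 0 < εc := by
    rw [hεc, Finset.lt_inf'_iff]
    intro jl _
    split_ifs with h
    · have := lt_of_le_of_ne (mn_le x jl.1 jl.2) (Ne.symm h.2)
      linarith
    · norm_num
  have hε_pos : 0 < ε := lt_min hεa_pos (lt_min hεc_pos (by linarith))
  have hε_εa : ε ≤ εa := min_le_left _ _
  have hε_εc : ε ≤ εc := le_trans (min_le_right _ _) (min_le_left _ _)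
  have hε_mn : ε ≤ -mn x j0 := le_trans (min_le_right _ _) (min_le_right _ _)
  have hεa_le : ∀ T, 0 < xbar d T → xbar x T < f T → ε ≤ (f T - xbar x T) / xbar d T := by
    intro T h1 h2
    have h5 := Finset.inf'_le (fun T => if 0 < xbar d T ∧ xbar x T < f T
      then (f T - xbar x T) / (xbar d T) else 1) (mem_univ T)
    rw [if_pos ⟨h1, h2⟩] at h5
    rw [← hεa] at h5
    exact le_trans hε_εa h5
  have hεc_le : ∀ j ℓ, mn x j < 0 → x j ℓ ≠ mn x j → 3 * ε ≤ x j ℓ - mn x j := by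
    intro j ℓ h1 h2
    have h5 := Finset.inf'_le (fun jl : Fin n × Fin k =>
      if mn x jl.1 < 0 ∧ x jl.1 jl.2 ≠ mn x jl.1
      then (x jl.1 jl.2 - mn x jl.1) / 3 else 1) (mem_univ (j, ℓ))
    rw [if_pos ⟨h1, h2⟩] at h5
    rw [← hεc] at h5
    have := le_trans hε_εc h5
    simp only at this
    linarith
  set y : Fin n → Fin k → ℝ := fun j ℓ => x j ℓ + ε * d j ℓ with hy
  have hyP : memP f y := by
    constructor
    · intro T
      rw [hy, xbar_add_smul]
      by_cases hT : xbar x T = f T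
      · nlinarith [hcoef T hT, hε_pos.le]
      · have hlt : xbar x T < f T := lt_of_le_of_ne (hx.1 T) hT
        by_cases hc : 0 < xbar d T
        · have h4 := hεa_le T hc hlt
          rw [le_div_iff₀ hc] at h4
          linarith
        · push_neg at hc
          nlinarith
    · intro j ℓ p hlp
      simp only [hy]
      have hsum := hx.2 j ℓ p hlp
      by_cases hmj : mn x j < 0
      · by_cases hjj : j = j0
        · subst hjj
          by_cases h1 : x j ℓ = mn x j <;> by_cases h2 : x j p = mn x j
          · rw [hd_j0_min ℓ h1, hd_j0_min p h2, h1, h2]; linarith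
          · rw [hd_j0_min ℓ h1, hd_nonmin _ p hmj h2]; linarith
          · rw [hd_nonmin _ ℓ hmj h1, hd_j0_min p h2]; linarith
          · rw [hd_nonmin _ ℓ hmj h1, hd_nonmin _ p hmj h2]; linarith
        · have e1 : d j ℓ ≤ 0 := hd_other j ℓ hjj
          have e2 : d j p ≤ 0 := hd_other j p hjj
          nlinarith
      · rw [hd_zero j ℓ hmj, hd_zero j p hmj]; simpa using hsum
  have hmn_y : ∀ j, j ≠ j0 → mn x j ≤ mn y j := by
    intro j hj
    refine le_mn y j _ fun ℓ => ?_
    simp only [hy]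
    by_cases hmj : mn x j < 0
    · by_cases h1 : x j ℓ = mn x j
      · have hd0 : d j ℓ = 0 := by simp [hd, hmj, h1, hj]
        rw [hd0, h1]; linarith
      · have h3 := hεc_le j ℓ hmj h1
        rw [hd_nonmin j ℓ hmj h1]; linarith
    · rw [hd_zero j ℓ hmj]; have := mn_le x j ℓ; linarith
  have hmn_y0 : mn x j0 + ε ≤ mn y j0 := by
    refine le_mn y j0 _ fun ℓ => ?_
    simp only [hy]
    by_cases h1 : x j0 ℓ = mn x j0
    · rw [hd_j0_min ℓ h1, h1]; linarith
    · rw [hd_nonmin j0 ℓ hj0 h1]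
      have := hεc_le j0 ℓ hj0 h1
      linarith
  have hPhi : Phi x + ε ≤ Phi y := by
    unfold Phi
    rw [← Finset.add_sum_erase _ (mn y) (mem_univ j0),
      ← Finset.add_sum_erase _ (mn x) (mem_univ j0)]
    have hrest : (∑ j ∈ univ.erase j0, mn x j) ≤ ∑ j ∈ univ.erase j0, mn y j :=
      Finset.sum_le_sum fun j hj => hmn_y j (mem_erase.mp hj).1
    linarith
  have := hmax y hyP
  linarith


lemma combine (hk : 2 ≤ k) [NeZero k] (f : (Fin n → KTree k) → ℝ) (hf : KSubmodular f)
    (h0 : f (fun _ => none) = 0) (x : Fin n → Fin k → ℝ) (hx : memP f x)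
    (hmax : ∀ y, memP f y → Phi y ≤ Phi x) :
    ∃ W, xbar x W = f W ∧ ∀ j, mn x j < 0 → ∃ p, W j = some p ∧ x j p = mn x j := by
  classical
  suffices h : ∀ s : Finset (Fin n), ∃ W, xbar x W = f W ∧
      (∀ j p, mn x j < 0 → W j = some p → x j p = mn x j) ∧
      (∀ j ∈ s, mn x j < 0 → ∃ p, W j = some p ∧ x j p = mn x j) by
    obtain ⟨W, h1, _, h3⟩ := h univ
    exact ⟨W, h1, fun j hj => h3 j (mem_univ j) hj⟩
  intro s
  induction s using Finset.induction_on with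
  | empty =>
    refine ⟨fun _ => none, ?_, ?_, ?_⟩
    · rw [h0]; unfold xbar; simp
    · intro j p _ h; exact absurd h (by simp)
    · intro j hj; exact absurd hj (by simp)
  | @insert a s ha ih =>
    obtain ⟨W, hW1, hW2, hW3⟩ := ih
    by_cases hmna : mn x a < 0
    · obtain ⟨V, hV1, ⟨p0, hVa, hxa⟩, hV2⟩ := core hk f hf x hx hmax a hmna
      obtain ⟨hjoin, hpair⟩ := tight_exchange f hf x hx hW1 hV1
      refine ⟨vjoin W V, hjoin, ?_, ?_⟩
      · intro j p hmn hjp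
        rcases tjoin_eq_some hjp with h | h
        · exact hW2 j p hmn h
        · exact hV2 j p hmn h
      · intro j hj hmn
        rcases Finset.mem_insert.mp hj with rfl | hjs
        · -- coordinate a
          cases hWa : W j with
          | none =>
            refine ⟨p0, ?_, hxa⟩
            show tjoin (W j) (V j) = some p0
            rw [hWa, hVa]; rfl
          | some q =>
            have hxq : x j q = mn x j := hW2 j q hmn hWa
            by_cases hq : q = p0
            · refine ⟨p0, ?_, hxa⟩
              show tjoin (W j) (V j) = some p0
              rw [hWa, hVa, hq]
              simp [tjoin]
            · have := hpair j q p0 hWa hVa hq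
              rw [hxq, hxa] at this
              linarith
        · obtain ⟨p, hWj, hxp⟩ := hW3 j hjs hmn
          cases hVj : V j with
          | none =>
            refine ⟨p, ?_, hxp⟩
            show tjoin (W j) (V j) = some p
            rw [hWj, hVj]; rfl
          | some r =>
            have hxr : x j r = mn x j := hV2 j r hmn hVj
            by_cases hr : r = p
            · refine ⟨p, ?_, hxp⟩
              show tjoin (W j) (V j) = some p
              rw [hWj, hVj, hr]
              simp [tjoin]
            · have := hpair j p r hWj hVj (fun hc => hr hc.symm)
              rw [hxp, hxr] at this
              linarith
    · refine ⟨W, hW1, hW2, ?_⟩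
      intro j hj hmn
      rcases Finset.mem_insert.mp hj with rfl | hjs
      · exact absurd hmn hmna
      · exact hW3 j hjs hmn

end FT


lemma FT.neg_nrm_le {k n : ℕ} (hk : 2 ≤ k) [NeZero k] (x : Fin n → Fin k → ℝ)
    (T : Fin n → KTree k) : -nrmFT x ≤ xbar x T := by
  haveI : Nonempty (Fin k) := inferInstance
  obtain ⟨ℓ0⟩ := (inferInstance : Nonempty (Fin k))
  unfold nrmFT xbar
  rw [← Finset.sum_neg_distrib]
  refine Finset.sum_le_sum fun i _ => ?_
  have hbdd : BddAbove (Set.range fun ℓ => |x i ℓ|) := Set.Finite.bddAbove (Set.finite_range _)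
  cases hTi : T i with
  | none =>
    simp only [Option.elim]
    have h0k : (0:ℝ) ≤ ⨆ ℓ, |x i ℓ| :=
      le_trans (abs_nonneg _) (le_ciSup hbdd ℓ0)
    linarith
  | some ℓ =>
    simp only [Option.elim]
    have h1 := le_ciSup hbdd ℓ
    have h2 : -x i ℓ ≤ |x i ℓ| := neg_le_abs _
    linarith


/-- Fujishige–Tanigawa Min-Max:
`min_{T ∈ 𝔗^n} f(T) = max_{x ∈ P_FT(f)} -‖x‖_{1,∞}`. -/
theorem stmt16 (k n : ℕ) (hk : 2 ≤ k) (hn : 1 ≤ n)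
    (f : (Fin n → KTree k) → ℝ) (hf : KSubmodular f) (h0 : f (fun _ => none) = 0) :
    ∃ m : ℝ, IsLeast (Set.range f) m ∧
      (∃ x, memPFT f x ∧ m = -nrmFT x) ∧
      (∀ x, memPFT f x → -nrmFT x ≤ m) := by
  classical
  haveI : NeZero k := ⟨by omega⟩
  obtain ⟨x0, hx0⟩ := FT.exists_memP hk f h0
  obtain ⟨x, hx, hxmax⟩ := FT.exists_max hk f ⟨x0, hx0⟩
  obtain ⟨W, hWt, hWg⟩ := FT.combine hk f hf h0 x hx hxmax
  have hxW : xbar x W = FT.Phi x := by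
    unfold FT.Phi xbar
    refine Finset.sum_congr rfl fun j _ => ?_
    by_cases hmn : FT.mn x j < 0
    · obtain ⟨p, hWj, hxp⟩ := hWg j hmn
      rw [hWj]; simpa using hxp
    · have h1 : FT.mn x j = 0 := le_antisymm (FT.mn_nonpos hk x hx.2 j) (not_lt.mp hmn)
      rw [h1]
      cases hWj : W j with
      | none => simp
      | some p => simpa using FT.row_zero hk x hx.2 j h1 p
  have hfW : f W = FT.Phi x := by rw [← hWt, hxW]
  refine ⟨FT.Phi x, ⟨⟨W, hfW⟩, ?_⟩, ⟨x, hx.1, ?_⟩, ?_⟩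
  · rintro r ⟨T, rfl⟩
    exact le_trans (FT.Phi_le_xbar hk x hx.2 T) (hx.1 T)
  · have hnx : nrmFT x = -FT.Phi x := by
      unfold nrmFT FT.Phi
      rw [← Finset.sum_neg_distrib]
      exact Finset.sum_congr rfl fun i _ => by
        rw [FT.sup_abs hk x hx.2 i]
    rw [hnx]; ring
  · intro x' hx'
    calc -nrmFT x' ≤ xbar x' W := FT.neg_nrm_le hk x' W
      _ ≤ f W := hx' W
      _ = FT.Phi x := hfW
end

section
/- Let k ≥ 1 and n ≥ 1. Every rank function r : 𝔗^n → ℤ_{≥0} of a k-matroid is k-submodular, i.e. r(T ⊓ U) + r(T ⊔ U) ≤ r(T) + r(U) for all T, U ∈ 𝔗^n. -/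
/-- `T` and `U` are compatible: in each coordinate at most one leaf appears. -/
def Compatible {k n : ℕ} (T U : Fin n → KTree k) : Prop :=
  ∀ i, T i = none ∨ U i = none ∨ T i = U i

/-- `T` and `U` are `ī`-similar: they agree outside coordinate `i`. -/
def ISimilar {k n : ℕ} (i : Fin n) (T U : Fin n → KTree k) : Prop :=
  ∀ j, j ≠ i → T j = U j

/-- `r : 𝔗^n → ℤ_{≥0}` is the rank function of a `k`-matroid. -/
def IsKMatroidRank {k n : ℕ} (r : (Fin n → KTree k) → ℕ) : Prop :=
  r (fun _ => none) = 0 ∧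
  (∀ (i : Fin n) (T U : Fin n → KTree k), ISimilar i T U → T i = none →
      r T ≤ r U ∧ r U ≤ r T + 1) ∧
  (∀ T U, Compatible T U → r (vmeet T U) + r (vjoin T U) ≤ r T + r U) ∧
  (∀ (i : Fin n) (T U : Fin n → KTree k) (p q : Fin k), ISimilar i T U →
      T i = some p → U i = some q → p ≠ q →
      r (vmeet T U) + r (vjoin T U) + 1 ≤ r T + r U)

/-- every rank function of a `k`-matroid is `k`-submodular. -/
theorem stmt18 (k n : ℕ) (hk : 1 ≤ k) (hn : 1 ≤ n)
    (r : (Fin n → KTree k) → ℕ) (hr : IsKMatroidRank r) :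
    ∀ T U, r (vmeet T U) + r (vjoin T U) ≤ r T + r U := by
  obtain ⟨h0, hmono, hsub, hstrict⟩ := hr
  suffices H : ∀ m : ℕ, ∀ T U : Fin n → KTree k,
      (Finset.univ.filter (fun i => T i ≠ none ∧ U i ≠ none ∧ T i ≠ U i)).card ≤ m →
      r (vmeet T U) + r (vjoin T U) ≤ r T + r U by
    intro T U; exact H _ T U le_rfl
  intro m
  induction m with
  | zero =>
    intro T U h
    apply hsub
    intro i
    by_contra hc
    push_neg at hc
    have hi : i ∈ Finset.univ.filter
        (fun i => T i ≠ none ∧ U i ≠ none ∧ T i ≠ U i) := by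
      simp only [Finset.mem_filter, Finset.mem_univ, true_and]
      exact ⟨hc.1, hc.2.1, hc.2.2⟩
    have := Finset.card_pos.mpr ⟨i, hi⟩
    omega
  | succ m ih =>
    intro T U h
    by_cases hc : (Finset.univ.filter
        (fun i => T i ≠ none ∧ U i ≠ none ∧ T i ≠ U i)).card ≤ m
    · exact ih T U hc
    · have hne : (Finset.univ.filter
          (fun i => T i ≠ none ∧ U i ≠ none ∧ T i ≠ U i)).Nonempty := by
        rw [← Finset.card_pos]; omega
      obtain ⟨i, hi⟩ := hne
      simp only [Finset.mem_filter, Finset.mem_univ, true_and] at hi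
      obtain ⟨hT, hU, hTU⟩ := hi
      set T' : Fin n → KTree k := Function.update T i none with hT'def
      have hT'i : T' i = none := Function.update_self i none T
      have hT'j : ∀ j, j ≠ i → T' j = T j := fun j hj =>
        Function.update_of_ne hj none T
      -- conflict set of T' U is a subset of erase i of old
      have hsubset : (Finset.univ.filter
          (fun j => T' j ≠ none ∧ U j ≠ none ∧ T' j ≠ U j)) ⊆
          ((Finset.univ.filter
            (fun j => T j ≠ none ∧ U j ≠ none ∧ T j ≠ U j)).erase i) := by
        intro j hj
        simp only [Finset.mem_filter, Finset.mem_univ, true_and] at hj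
        have hji : j ≠ i := by
          intro e; subst e; exact hj.1 hT'i
        rw [Finset.mem_erase]
        refine ⟨hji, ?_⟩
        simp only [Finset.mem_filter, Finset.mem_univ, true_and]
        rw [hT'j j hji] at hj
        exact hj
      have hcard' : (Finset.univ.filter
          (fun j => T' j ≠ none ∧ U j ≠ none ∧ T' j ≠ U j)).card ≤ m := by
        have h1 := Finset.card_le_card hsubset
        have h2 : ((Finset.univ.filter
            (fun j => T j ≠ none ∧ U j ≠ none ∧ T j ≠ U j)).erase i).card <
            (Finset.univ.filter
            (fun j => T j ≠ none ∧ U j ≠ none ∧ T j ≠ U j)).card := by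
          apply Finset.card_erase_lt_of_mem
          simp only [Finset.mem_filter, Finset.mem_univ, true_and]
          exact ⟨hT, hU, hTU⟩
        omega
      have key := ih T' U hcard'
      -- vmeet T' U = vmeet T U
      have hmeq : vmeet T' U = vmeet T U := by
        funext j
        by_cases hj : j = i
        · subst hj
          simp only [vmeet, tmeet, hT'i]
          have h1 : (none : KTree k) ≠ U j := fun e => hU e.symm
          have h2 : T j ≠ U j := hTU
          simp [h1, h2]
        · simp [vmeet, hT'j j hj]
      -- vjoin T U i = none
      have hjo : vjoin T U i = none := by
        obtain ⟨p, hp⟩ := Option.ne_none_iff_exists'.mp hT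
        obtain ⟨q, hq⟩ := Option.ne_none_iff_exists'.mp hU
        have hpq : p ≠ q := by
          intro e; subst e; rw [hp, hq] at hTU; exact hTU rfl
        simp [vjoin, tjoin, hp, hq, hpq]
      -- monotonicity: r (vjoin T U) ≤ r (vjoin T' U)
      have hsim1 : ISimilar i (vjoin T U) (vjoin T' U) := by
        intro j hj
        simp [vjoin, hT'j j hj]
      have hm1 : r (vjoin T U) ≤ r (vjoin T' U) :=
        (hmono i (vjoin T U) (vjoin T' U) hsim1 hjo).1
      -- monotonicity: r T' ≤ r T
      have hsim2 : ISimilar i T' T := fun j hj => hT'j j hj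
      have hm2 : r T' ≤ r T := (hmono i T' T hsim2 hT'i).1
      rw [hmeq] at key
      omega
end
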